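/- arXiv:2108.04054 — 5 statements merged into one kernel-verified Lean document; each statement's English description precedes it below -/
import Mathlib

section
/- Fix a constraint value C > 0. A bounded measurable strategy f with mca(f) ≤ C satisfies wp(f; g) ≥ 0 for every bounded measurable strategy g with mca(g) ≤ C if and only if there exists a constant c > 0 such that f is almost everywhere equal to c on [0, 2C] and almost everywhere equal to 0 on (2C, ∞). -/
open MeasureTheory Set

/-- Mean competitive ability of a function supported in `[0, ∞)`:
`mca f = (∫₀^∞ t f(t) dt) / (∫₀^∞ f(t) dt)`. -/
noncomputable def mca (f : ℝ → ℝ) : ℝ :=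
  (∫ t in Ioi (0:ℝ), t * f t) / (∫ t in Ioi (0:ℝ), f t)

/-- Payoff of `f` against `g`:
`wp f g = ∫₀^∞ f(x) (∫₀ˣ g(t) dt − ∫ₓ^∞ g(t) dt) dx`. -/
noncomputable def wp (f g : ℝ → ℝ) : ℝ :=
  ∫ x in Ioi (0:ℝ), f x * ((∫ t in Ioc (0:ℝ) x, g t) - ∫ t in Ioi x, g t)

/-- A bounded measurable strategy: measurable, bounded, nonnegative, compactly
supported in `[0, ∞)`, and not almost everywhere zero. -/
def IsStrategy (f : ℝ → ℝ) : Prop :=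
  Measurable f ∧ (∃ Cb : ℝ, ∀ x, f x ≤ Cb) ∧ (∀ x, 0 ≤ f x) ∧
  (∃ R : ℝ, Function.support f ⊆ Icc 0 R) ∧ ¬ f =ᵐ[volume] (0 : ℝ → ℝ)

/-!
Write `F x = ∫₀ˣ f` and `M = ∫ f`. Fubini turns the payoff into
`wp f g = M ∫ g - 2 ∫ g F`, so `f` is unbeatable iff `∫ g F ≤ (M / 2) ∫ g` for every admissible `g`.

If `f = c` on `[0, 2C]` and vanishes beyond, then `F x ≤ c x` and `M = 2Cc`, and the constraint
`∫ t g ≤ C ∫ g` gives the inequality at once.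

Conversely, testing against mixtures of two narrow uniform blocks shows
`w F s + (1 - w) F t ≤ M / 2` whenever `w s + (1 - w) t ≤ C`. Symmetric pairs `(x, 2C - x)` give
`∫₀^{2C} F ≤ C M`, while `mca f ≤ C` reads `∫ min x (2C) f ≤ ∫ x f ≤ C M`, i.e.
`∫₀^{2C} F ≥ C M`; equality forces `f = 0` beyond `2C`, so `F (2C) = M`. Pairing `x` with `2C` or
with `0` then gives `F x ≤ M x / (2C)` on `[0, 2C]`, and since both sides have the same integral,
`F` is linear there: `f` is a.e. the constant `M / (2C)`.
-/

open Filter Topology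

noncomputable def primitive (f : ℝ → ℝ) (x : ℝ) : ℝ := ∫ t in Ioc (0:ℝ) x, f t

noncomputable def mass (f : ℝ → ℝ) : ℝ := ∫ t in Ioi (0:ℝ), f t

section Primitive

variable {f g : ℝ → ℝ}

lemma primitive_of_nonpos {x : ℝ} (hx : x ≤ 0) : primitive f x = 0 := by
  simp [primitive, Ioc_eq_empty (not_lt.2 hx)]

lemma primitive_eq_intervalIntegral {x : ℝ} (hx : 0 ≤ x) :
    primitive f x = ∫ t in (0:ℝ)..x, f t :=
  (intervalIntegral.integral_of_le hx).symm

lemma mass_sub_primitive (hf : IntegrableOn f (Ioi 0)) {x : ℝ} (hx : 0 ≤ x) :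
    mass f - primitive f x = ∫ t in Ioi x, f t := by
  rw [mass, primitive, ← Ioc_union_Ioi_eq_Ioi hx, setIntegral_union (Ioc_disjoint_Ioi le_rfl)
    measurableSet_Ioi (hf.mono_set Ioc_subset_Ioi_self) (hf.mono_set (Ioi_subset_Ioi hx)),
    add_sub_cancel_left]

lemma continuous_primitive (hf : IntegrableOn f (Ioi 0)) : Continuous (primitive f) := by
  have hc := (hf.integrable_indicator measurableSet_Ioi).continuous_primitive 0
  convert hc using 1
  ext x
  rcases le_total x 0 with hx | hx
  · rw [primitive_of_nonpos hx, intervalIntegral.integral_of_ge hx, setIntegral_indicator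
      measurableSet_Ioi, Ioc_inter_Ioi, max_eq_right hx, Ioc_eq_empty (lt_irrefl 0),
      Measure.restrict_empty, integral_zero_measure, neg_zero]
  · rw [primitive, intervalIntegral.integral_of_le hx, setIntegral_indicator measurableSet_Ioi,
      Ioc_inter_Ioi, max_self]

lemma norm_primitive_le (hf : IntegrableOn f (Ioi 0)) (x : ℝ) :
    ‖primitive f x‖ ≤ ∫ t in Ioi (0:ℝ), ‖f t‖ :=
  (norm_integral_le_integral_norm _).trans <| setIntegral_mono_set
    hf.norm (ae_of_all _ fun _ => norm_nonneg _) Ioc_subset_Ioi_self.eventuallyLE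

lemma integrableOn_mul_primitive (hf : IntegrableOn f (Ioi 0)) (hg : IntegrableOn g (Ioi 0)) :
    IntegrableOn (fun x => f x * primitive g x) (Ioi 0) :=
  hf.mul_bdd (continuous_primitive hg).aestronglyMeasurable
    (ae_of_all _ (norm_primitive_le hg))

lemma primitive_mono (hf : IntegrableOn f (Ioi 0)) (h0 : ∀ x, 0 ≤ f x) : Monotone (primitive f) :=
  fun _ _ hab => setIntegral_mono_set (hf.mono_set Ioc_subset_Ioi_self)
    (ae_of_all _ h0) (Ioc_subset_Ioc_right hab).eventuallyLE

lemma integral_mul_primitive_swap (hf : IntegrableOn f (Ioi 0)) (hg : IntegrableOn g (Ioi 0)) :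
    ∫ x in Ioi (0:ℝ), f x * primitive g x = ∫ t in Ioi (0:ℝ), g t * (mass f - primitive f t) := by
  -- both sides integrate `f x * g t` over `0 < t ≤ x`
  set K : ℝ → ℝ → ℝ := fun x t => if t ≤ x then f x * g t else 0
  have hK : Integrable (Function.uncurry K)
      ((volume.restrict (Ioi 0)).prod (volume.restrict (Ioi 0))) :=
    ((hf.mul_prod hg).indicator (measurableSet_le measurable_snd measurable_fst)).congr
      (ae_of_all _ fun _ => rfl)
  have hx : ∀ x, f x * primitive g x = ∫ t in Ioi (0:ℝ), K x t := by
    intro x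
    rw [primitive, ← integral_const_mul, ← Ioi_inter_Iic, ← setIntegral_indicator measurableSet_Iic]
    congr 1 with t
  have ht : ∀ t ∈ Ioi (0:ℝ), ∫ x in Ioi (0:ℝ), K x t = g t * (mass f - primitive f t) := by
    intro t (ht : 0 < t)
    rw [mass_sub_primitive hf ht.le, ← integral_Ici_eq_integral_Ioi (x := t), mul_comm,
      ← integral_mul_const, ← inter_eq_right.2 (Ici_subset_Ioi.2 ht),
      ← setIntegral_indicator measurableSet_Ici]
    congr 1 with x
  simp_rw [hx]
  rw [integral_integral_swap hK, setIntegral_congr_fun measurableSet_Ioi ht]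

lemma primitive_le_mul_of_ae_le {c : ℝ} (hf : IntegrableOn f (Ioi 0))
    (h : ∀ᵐ x ∂volume.restrict (Ioi 0), f x ≤ c) {t : ℝ} (ht : 0 ≤ t) :
    primitive f t ≤ c * t := by
  calc primitive f t ≤ ∫ _ in Ioc (0:ℝ) t, c :=
        setIntegral_mono_ae_restrict (hf.mono_set Ioc_subset_Ioi_self)
          (integrableOn_const measure_Ioc_lt_top.ne)
          (ae_restrict_of_ae_restrict_of_subset Ioc_subset_Ioi_self h)
    _ = c * t := by rw [setIntegral_const, Real.volume_real_Ioc_of_le ht, smul_eq_mul, sub_zero,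
          mul_comm]

lemma wp_eq_mass_mul_mass_sub (hf : IntegrableOn f (Ioi 0))
    (hg : IntegrableOn g (Ioi 0)) :
    wp f g = mass f * mass g - 2 * ∫ t in Ioi (0:ℝ), g t * primitive f t := by
  have hwp : wp f g = ∫ x in Ioi (0:ℝ), (2 * (f x * primitive g x) - mass g * f x) := by
    refine setIntegral_congr_fun measurableSet_Ioi fun x hx => ?_
    rw [← mass_sub_primitive hg (le_of_lt hx), primitive]
    ring
  have hswap : ∫ t in Ioi (0:ℝ), g t * (mass f - primitive f t)
      = ∫ t in Ioi (0:ℝ), (mass f * g t - g t * primitive f t) :=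
    integral_congr_ae (ae_of_all _ fun t => by ring)
  rw [hwp, integral_sub ((integrableOn_mul_primitive hf hg).const_mul 2) (hf.const_mul _),
    integral_const_mul, integral_const_mul, integral_mul_primitive_swap hf hg, hswap,
    integral_sub (hg.const_mul _) (integrableOn_mul_primitive hg hf), integral_const_mul, mass,
    mass]
  ring

lemma integrableOn_min_mul (hf : IntegrableOn f (Ioi 0)) {D : ℝ} (hD : 0 ≤ D) :
    IntegrableOn (fun x => min x D * f x) (Ioi 0) := by
  refine hf.bdd_mul (c := D) (by fun_prop) ?_
  filter_upwards [ae_restrict_mem measurableSet_Ioi] with x (hx : 0 < x)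
  rw [Real.norm_eq_abs, abs_of_nonneg (le_min hx.le hD)]
  exact min_le_right x D

lemma setIntegral_min_mul (hf : IntegrableOn f (Ioi 0)) {D : ℝ} (hD : 0 ≤ D) :
    ∫ x in Ioi (0:ℝ), min x D * f x = D * mass f - ∫ t in Ioc 0 D, primitive f t := by
  set u : ℝ → ℝ := (Ioc 0 D).indicator fun _ => 1
  have hu : IntegrableOn u (Ioi 0) :=
    (integrable_indicator_iff measurableSet_Ioc).2 (integrableOn_const measure_Ioc_lt_top.ne)
      |>.integrableOn
  have hmin : ∀ x ∈ Ioi (0:ℝ), min x D * f x = f x * primitive u x := fun x (hx : 0 < x) => by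
    rw [primitive, setIntegral_indicator measurableSet_Ioc, Ioc_inter_Ioc, max_self,
      setIntegral_const, Real.volume_real_Ioc_of_le (le_min hx.le hD), smul_eq_mul, mul_one,
      sub_zero, mul_comm]
  have hF := continuous_primitive hf
  have hmass : IntegrableOn (fun _ => mass f) (Ioc (0:ℝ) D) :=
    integrableOn_const measure_Ioc_lt_top.ne
  have hind : (fun t => u t * (mass f - primitive f t))
      = (Ioc 0 D).indicator fun t => mass f - primitive f t := by
    ext t; by_cases ht : t ∈ Ioc 0 D <;> simp [u, ht]
  rw [setIntegral_congr_fun measurableSet_Ioi hmin, integral_mul_primitive_swap hf hu, hind,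
    setIntegral_indicator measurableSet_Ioc, inter_eq_right.2 Ioc_subset_Ioi_self,
    integral_sub hmass hF.integrableOn_Ioc, setIntegral_const,
    Real.volume_real_Ioc_of_le hD, smul_eq_mul, sub_zero, mul_comm]

end Primitive

lemma Monotone.le_inv_mul_setIntegral_Ioc {φ : ℝ → ℝ} (hmono : Monotone φ) (hφ : Continuous φ)
    {r ε : ℝ} (hε : 0 < ε) : φ r ≤ ε⁻¹ * ∫ x in Ioc r (r + ε), φ x := by
  have h : ∫ _ in Ioc r (r + ε), φ r ≤ ∫ x in Ioc r (r + ε), φ x :=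
    setIntegral_mono_on (integrableOn_const measure_Ioc_lt_top.ne) hφ.integrableOn_Ioc
      measurableSet_Ioc fun x hx => hmono hx.1.le
  rw [setIntegral_const, Real.volume_real_Ioc_of_le (by linarith), smul_eq_mul,
    add_sub_cancel_left] at h
  rwa [le_inv_mul_iff₀ hε]

lemma eqOn_of_le_of_setIntegral_Ioc_eq {φ ψ : ℝ → ℝ} {a b : ℝ} (hab : a < b)
    (hφ : ContinuousOn φ (Icc a b)) (hψ : ContinuousOn ψ (Icc a b))
    (hle : ∀ x ∈ Icc a b, φ x ≤ ψ x) (heq : ∫ x in Ioc a b, φ x = ∫ x in Ioc a b, ψ x) :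
    EqOn φ ψ (Icc a b) := by
  have hφi := (hφ.integrableOn_Icc (μ := volume)).mono_set Ioc_subset_Icc_self
  have hψi := (hψ.integrableOn_Icc (μ := volume)).mono_set Ioc_subset_Icc_self
  have h0 : ∫ x in Ioc a b, (ψ x - φ x) = 0 := by rw [integral_sub hψi hφi, heq, sub_self]
  have hnonneg : 0 ≤ᵐ[volume.restrict (Ioc a b)] fun x => ψ x - φ x := by
    filter_upwards [ae_restrict_mem measurableSet_Ioc] with x hx
    exact sub_nonneg.2 (hle x (Ioc_subset_Icc_self hx))
  have hae : (fun x => ψ x - φ x) =ᵐ[volume.restrict (Icc a b)] 0 := by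
    rw [← Measure.restrict_congr_set Ioc_ae_eq_Icc]
    exact (setIntegral_eq_zero_iff_of_nonneg_ae hnonneg (hψi.sub hφi)).1 h0
  have h := Measure.eqOn_of_ae_eq hae (hψ.sub hφ) continuousOn_const
    (closure_interior_Icc hab.ne).symm.subset
  exact fun x hx => (sub_eq_zero.1 (h hx)).symm

lemma ae_eq_of_intervalIntegral_eq_mul {f : ℝ → ℝ} {a b c : ℝ} (hf : LocallyIntegrable f)
    (h : ∀ x ∈ Icc a b, ∫ t in a..x, f t = c * (x - a)) :
    ∀ᵐ x ∂(volume.restrict (Icc a b)), f x = c := by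
  rw [← Measure.restrict_congr_set Ioo_ae_eq_Icc]
  filter_upwards [ae_restrict_of_ae (LocallyIntegrable.ae_hasDerivAt_integral hf),
    ae_restrict_mem measurableSet_Ioo] with x hx hxI
  have hlin : HasDerivAt (fun y => ∫ t in a..y, f t) c x := by
    refine HasDerivAt.congr_of_eventuallyEq ?_ ?_ (f := fun y => c * (y - a))
    · simpa using ((hasDerivAt_id x).sub_const a).const_mul c
    · filter_upwards [Ioo_mem_nhds hxI.1 hxI.2] with y hy
      exact h y (Ioo_subset_Icc_self hy)
  exact (hx a).unique hlin

namespace IsStrategy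

variable {C : ℝ} {f : ℝ → ℝ}

lemma nonneg (hf : IsStrategy f) (x : ℝ) : 0 ≤ f x := hf.2.2.1 x

lemma integrable (hf : IsStrategy f) : Integrable f := by
  obtain ⟨hm, ⟨B, hB⟩, h0, ⟨R, hR⟩, -⟩ := hf
  rw [← integrableOn_iff_integrable_of_support_subset hR]
  exact Measure.integrableOn_of_bounded (M := B) (by simp) hm.aestronglyMeasurable
    (ae_of_all _ fun x => by simpa [abs_of_nonneg (h0 x)] using hB x)

lemma integrable_mul_id (hf : IsStrategy f) : Integrable fun t => t * f t := by
  obtain ⟨R, hR⟩ := hf.2.2.2.1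
  have hsupp := (Function.support_mul_subset_right (fun t => t) f).trans hR
  rw [← integrableOn_iff_integrable_of_support_subset hsupp]
  refine hf.integrable.integrableOn.bdd_mul (c := R) measurable_id.aestronglyMeasurable ?_
  filter_upwards [ae_restrict_mem measurableSet_Icc] with t ht
  rw [Real.norm_eq_abs, abs_of_nonneg ht.1]
  exact ht.2

lemma mass_pos (hf : IsStrategy f) : 0 < mass f := by
  obtain ⟨R, hR⟩ := hf.2.2.2.1
  have hmass : mass f = ∫ t, f t := by
    rw [mass, ← integral_Ici_eq_integral_Ioi]
    exact setIntegral_eq_integral_of_forall_compl_eq_zero fun x hx =>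
      Function.notMem_support.1 fun h => hx (hR h).1
  rw [hmass]
  refine (integral_nonneg hf.nonneg).lt_of_ne fun h => hf.2.2.2.2 ?_
  exact (integral_eq_zero_iff_of_nonneg hf.nonneg hf.integrable).1 h.symm

lemma integral_mul_id_le (hf : IsStrategy f) (hfC : mca f ≤ C) :
    ∫ t in Ioi (0:ℝ), t * f t ≤ C * mass f :=
  (div_le_iff₀ hf.mass_pos).1 hfC

lemma setIntegral_min_mul_le (hf : IsStrategy f) {D : ℝ} (hD : 0 ≤ D) :
    ∫ x in Ioi (0:ℝ), min x D * f x ≤ ∫ x in Ioi (0:ℝ), x * f x :=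
  setIntegral_mono_on (integrableOn_min_mul hf.integrable.integrableOn hD)
    hf.integrable_mul_id.integrableOn measurableSet_Ioi
    fun x _ => mul_le_mul_of_nonneg_right (min_le_left x D) (hf.nonneg x)

lemma mul_mass_le_setIntegral_primitive (hf : IsStrategy f) (hfC : mca f ≤ C) (hC : 0 ≤ C) :
    C * mass f ≤ ∫ t in Ioc 0 (2 * C), primitive f t := by
  have h2C : 0 ≤ 2 * C := by linarith
  linarith [setIntegral_min_mul hf.integrable.integrableOn h2C, hf.setIntegral_min_mul_le h2C,
    hf.integral_mul_id_le hfC]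

lemma ae_eq_zero_of_setIntegral_primitive_le (hf : IsStrategy f) (hfC : mca f ≤ C) (hC : 0 ≤ C)
    (hI : ∫ t in Ioc 0 (2 * C), primitive f t ≤ C * mass f) :
    ∀ᵐ x ∂(volume.restrict (Ioi (2 * C))), f x = 0 := by
  have h2C : 0 ≤ 2 * C := by linarith
  set φ : ℝ → ℝ := fun x => x * f x - min x (2 * C) * f x
  have hφi : IntegrableOn φ (Ioi 0) :=
    hf.integrable_mul_id.integrableOn.sub (integrableOn_min_mul hf.integrable.integrableOn h2C)
  have hφ0 : ∀ x, 0 ≤ φ x := fun x =>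
    sub_nonneg.2 (mul_le_mul_of_nonneg_right (min_le_left x _) (hf.nonneg x))
  have hφ : ∫ x in Ioi (0:ℝ), φ x = 0 := by
    refine le_antisymm ?_ (setIntegral_nonneg measurableSet_Ioi fun x _ => hφ0 x)
    rw [integral_sub hf.integrable_mul_id.integrableOn
      (integrableOn_min_mul hf.integrable.integrableOn h2C), setIntegral_min_mul
      hf.integrable.integrableOn h2C]
    linarith [hf.integral_mul_id_le hfC]
  have hae := (setIntegral_eq_zero_iff_of_nonneg_ae (ae_of_all _ hφ0) hφi).1 hφ
  filter_upwards [ae_restrict_of_ae_restrict_of_subset (Ioi_subset_Ioi h2C) hae,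
    ae_restrict_mem measurableSet_Ioi] with x hx (hx2C : 2 * C < x)
  have : (x - 2 * C) * f x = 0 := by
    simpa [φ, min_eq_right hx2C.le, sub_mul] using hx
  exact (mul_eq_zero.1 this).resolve_left (sub_ne_zero.2 hx2C.ne')

end IsStrategy

lemma wp_nonneg_of_primitive_le {f g : ℝ → ℝ} {C c : ℝ} (hf : IntegrableOn f (Ioi 0))
    (hc : 0 ≤ c) (hF : ∀ t, 0 ≤ t → primitive f t ≤ c * t) (hmass : mass f = 2 * C * c)
    (hg : IsStrategy g) (hgC : mca g ≤ C) : 0 ≤ wp f g := by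
  have hgF : ∫ t in Ioi (0:ℝ), g t * primitive f t ≤ c * ∫ t in Ioi (0:ℝ), t * g t := by
    rw [← integral_const_mul]
    refine setIntegral_mono_on (integrableOn_mul_primitive hg.integrable.integrableOn hf)
      (hg.integrable_mul_id.integrableOn.const_mul c) measurableSet_Ioi fun t ht => ?_
    calc g t * primitive f t ≤ g t * (c * t) :=
          mul_le_mul_of_nonneg_left (hF t (le_of_lt ht)) (hg.nonneg t)
      _ = c * (t * g t) := by ring
  have hmoment := mul_le_mul_of_nonneg_left (hg.integral_mul_id_le hgC) hc
  rw [wp_eq_mass_mul_mass_sub hf hg.integrable.integrableOn, hmass]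
  linarith

lemma mass_of_ae_eq_uniform {f : ℝ → ℝ} {C c : ℝ} (hC : 0 ≤ C) (hf : IntegrableOn f (Ioi 0))
    (h1 : ∀ᵐ x ∂(volume.restrict (Icc (0:ℝ) (2*C))), f x = c)
    (h2 : ∀ᵐ x ∂(volume.restrict (Ioi (2*C))), f x = 0) :
    mass f = 2 * C * c := by
  have hhead : primitive f (2 * C) = 2 * C * c := by
    rw [primitive, integral_congr_ae (ae_restrict_of_ae_restrict_of_subset Ioc_subset_Icc_self h1),
      setIntegral_const, Real.volume_real_Ioc_of_le (by linarith), smul_eq_mul, sub_zero]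
  have htail : ∫ x in Ioi (2*C), f x = 0 := by
    rw [integral_congr_ae h2, integral_zero]
  linarith [mass_sub_primitive hf (by linarith : (0:ℝ) ≤ 2 * C)]

theorem wp_nonneg_of_ae_eq_uniform {f g : ℝ → ℝ} {C c : ℝ} (hC : 0 ≤ C) (hc : 0 ≤ c)
    (hf : IntegrableOn f (Ioi 0))
    (h1 : ∀ᵐ x ∂(volume.restrict (Icc (0:ℝ) (2*C))), f x = c)
    (h2 : ∀ᵐ x ∂(volume.restrict (Ioi (2*C))), f x = 0)
    (hg : IsStrategy g) (hgC : mca g ≤ C) : 0 ≤ wp f g := by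
  have hle : ∀ᵐ x ∂volume.restrict (Ioi 0), f x ≤ c := by
    rw [← Ioc_union_Ioi_eq_Ioi (by linarith : (0:ℝ) ≤ 2 * C), ae_restrict_union_iff]
    exact ⟨(ae_restrict_of_ae_restrict_of_subset Ioc_subset_Icc_self h1).mono fun x hx => hx.le,
      h2.mono fun x hx => hx.trans_le hc⟩
  exact wp_nonneg_of_primitive_le hf hc (fun t ht => primitive_le_mul_of_ae_le hf hle ht)
    (mass_of_ae_eq_uniform hC hf h1 h2) hg hgC

noncomputable def block (s ε : ℝ) : ℝ → ℝ := (Ioc s (s + ε)).indicator fun _ => ε⁻¹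

noncomputable def blockMixture (s t w ε : ℝ) (x : ℝ) : ℝ :=
  w * block s ε x + (1 - w) * block t ε x

section Block

variable {s t w ε : ℝ}

lemma block_nonneg (hε : 0 ≤ ε) (x : ℝ) : 0 ≤ block s ε x :=
  indicator_nonneg (fun _ _ => inv_nonneg.2 hε) x

lemma block_le (hε : 0 ≤ ε) (x : ℝ) : block s ε x ≤ ε⁻¹ :=
  indicator_le_self' (fun _ _ => inv_nonneg.2 hε) x

lemma block_mul_eq_indicator (φ : ℝ → ℝ) :
    (fun x => block s ε x * φ x) = (Ioc s (s + ε)).indicator fun x => ε⁻¹ * φ x := by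
  ext x; by_cases hx : x ∈ Ioc s (s + ε) <;> simp [block, hx]

lemma integrable_block_mul {φ : ℝ → ℝ} (hφ : Continuous φ) :
    Integrable fun x => block s ε x * φ x := by
  rw [block_mul_eq_indicator, integrable_indicator_iff measurableSet_Ioc]
  exact (continuous_const.mul hφ).integrableOn_Ioc

lemma setIntegral_block_mul (hs : 0 ≤ s) (φ : ℝ → ℝ) :
    ∫ x in Ioi (0:ℝ), block s ε x * φ x = ε⁻¹ * ∫ x in Ioc s (s + ε), φ x := by
  rw [block_mul_eq_indicator, setIntegral_indicator measurableSet_Ioc,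
    inter_eq_right.2 (Ioc_subset_Ioi_self.trans (Ioi_subset_Ioi hs)), integral_const_mul]

lemma setIntegral_blockMixture_mul (hs : 0 ≤ s) (ht : 0 ≤ t) {φ : ℝ → ℝ} (hφ : Continuous φ) :
    ∫ x in Ioi (0:ℝ), blockMixture s t w ε x * φ x
      = w * (ε⁻¹ * ∫ x in Ioc s (s + ε), φ x) + (1 - w) * (ε⁻¹ * ∫ x in Ioc t (t + ε), φ x) := by
  simp only [blockMixture, add_mul, mul_assoc]
  rw [integral_add ((integrable_block_mul hφ).integrableOn.const_mul _)
    ((integrable_block_mul hφ).integrableOn.const_mul _), integral_const_mul, integral_const_mul,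
    setIntegral_block_mul hs, setIntegral_block_mul ht]

lemma mass_blockMixture (hs : 0 ≤ s) (ht : 0 ≤ t) (hε : 0 < ε) :
    mass (blockMixture s t w ε) = 1 := by
  have h := setIntegral_blockMixture_mul (w := w) (ε := ε) hs ht continuous_const (φ := fun _ => 1)
  simp only [mul_one, setIntegral_const, smul_eq_mul] at h
  rw [mass, h, Real.volume_real_Ioc_of_le (by linarith), Real.volume_real_Ioc_of_le (by linarith)]
  field_simp
  ring

lemma moment_blockMixture (hs : 0 ≤ s) (ht : 0 ≤ t) (hε : 0 < ε) :
    ∫ x in Ioi (0:ℝ), x * blockMixture s t w ε x = w * s + (1 - w) * t + ε / 2 := by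
  simp_rw [mul_comm _ (blockMixture _ _ _ _ _)]
  rw [setIntegral_blockMixture_mul hs ht (φ := fun x => x) continuous_id]
  rw [← intervalIntegral.integral_of_le (by linarith),
    ← intervalIntegral.integral_of_le (by linarith), integral_id, integral_id]
  field_simp
  ring

lemma isStrategy_blockMixture (hs : 0 ≤ s) (ht : 0 ≤ t) (hw0 : 0 ≤ w) (hw1 : w ≤ 1)
    (hε : 0 < ε) : IsStrategy (blockMixture s t w ε) := by
  have hmeas : ∀ r, Measurable (block r ε) := fun r =>
    measurable_const.indicator measurableSet_Ioc
  refine ⟨(measurable_const.mul (hmeas s)).add (measurable_const.mul (hmeas t)),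
    ⟨w * ε⁻¹ + (1 - w) * ε⁻¹, fun x => ?_⟩, fun x => ?_, ⟨max s t + ε, ?_⟩, fun h => ?_⟩
  · exact add_le_add (mul_le_mul_of_nonneg_left (block_le hε.le x) hw0)
      (mul_le_mul_of_nonneg_left (block_le hε.le x) (by linarith))
  · exact add_nonneg (mul_nonneg hw0 (block_nonneg hε.le x))
      (mul_nonneg (by linarith) (block_nonneg hε.le x))
  · refine (Function.support_add _ _).trans (union_subset ?_ ?_)
    · exact (Function.support_mul_subset_right _ _).trans <| support_indicator_subset.trans
        fun x hx => ⟨hs.trans hx.1.le, hx.2.trans (by linarith [le_max_left s t])⟩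
    · exact (Function.support_mul_subset_right _ _).trans <| support_indicator_subset.trans
        fun x hx => ⟨ht.trans hx.1.le, hx.2.trans (by linarith [le_max_right s t])⟩
  · have h0 : mass (blockMixture s t w ε) = 0 := by
      rw [mass, integral_congr_ae (ae_restrict_of_ae h)]
      simp
    rw [mass_blockMixture hs ht hε] at h0
    exact one_ne_zero h0

end Block

def IsUnbeatable (C : ℝ) (f : ℝ → ℝ) : Prop :=
  ∀ g : ℝ → ℝ, IsStrategy g → mca g ≤ C → 0 ≤ wp f g

namespace IsUnbeatable

variable {C : ℝ} {f : ℝ → ℝ}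

lemma two_point_of_lt (H : IsUnbeatable C f) (hf : IsStrategy f) {s t w : ℝ} (hs : 0 ≤ s)
    (ht : 0 ≤ t) (hw0 : 0 ≤ w) (hw1 : w ≤ 1) (hm : w * s + (1 - w) * t < C) :
    w * primitive f s + (1 - w) * primitive f t ≤ mass f / 2 := by
  -- The blocks raise the mean by `ε / 2`, and averaging the monotone `primitive f` over a block
  -- can only increase it.
  set ε := C - (w * s + (1 - w) * t)
  have hε : 0 < ε := sub_pos.2 hm
  have hg := isStrategy_blockMixture hs ht hw0 hw1 hε
  have hmca : mca (blockMixture s t w ε) ≤ C := by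
    change (∫ x in Ioi (0:ℝ), x * blockMixture s t w ε x) / mass _ ≤ C
    rw [moment_blockMixture hs ht hε, mass_blockMixture hs ht hε, div_one]
    linarith
  have hfi := hf.integrable.integrableOn (s := Ioi 0)
  have hF := continuous_primitive hfi
  have hmono := primitive_mono hfi hf.nonneg
  have hwp := H _ hg hmca
  rw [wp_eq_mass_mul_mass_sub hfi hg.integrable.integrableOn, mass_blockMixture hs ht hε,
    setIntegral_blockMixture_mul hs ht hF] at hwp
  have hs' := mul_le_mul_of_nonneg_left (hmono.le_inv_mul_setIntegral_Ioc hF hε (r := s)) hw0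
  have ht' := mul_le_mul_of_nonneg_left (hmono.le_inv_mul_setIntegral_Ioc hF hε (r := t))
    (sub_nonneg.2 hw1)
  linarith

lemma two_point (H : IsUnbeatable C f) (hf : IsStrategy f) (hC : 0 < C) {s t w : ℝ}
    (hs : 0 ≤ s) (ht : 0 ≤ t) (hw0 : 0 ≤ w) (hw1 : w ≤ 1) (hm : w * s + (1 - w) * t ≤ C) :
    w * primitive f s + (1 - w) * primitive f t ≤ mass f / 2 := by
  have hF := continuous_primitive (hf.integrable.integrableOn (s := Ioi 0))
  have hlim : Tendsto (fun r => w * primitive f (r * s) + (1 - w) * primitive f (r * t))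
      (𝓝[<] 1) (𝓝 (w * primitive f s + (1 - w) * primitive f t)) := by
    have hcont : Continuous fun r => w * primitive f (r * s) + (1 - w) * primitive f (r * t) := by
      fun_prop
    simpa using (hcont.tendsto 1).mono_left nhdsWithin_le_nhds
  -- shrinking `s` and `t` by a factor `r < 1` makes the mean constraint strict
  refine le_of_tendsto hlim ?_
  filter_upwards [Ioo_mem_nhdsLT zero_lt_one] with r ⟨hr0, hr1⟩
  refine H.two_point_of_lt hf (mul_nonneg hr0.le hs) (mul_nonneg hr0.le ht) hw0 hw1 ?_
  nlinarith [mul_le_mul_of_nonneg_left hm hr0.le]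

lemma primitive_add_primitive_reflect_le (H : IsUnbeatable C f) (hf : IsStrategy f) (hC : 0 < C)
    {x : ℝ} (hx : x ∈ Icc 0 (2 * C)) : primitive f x + primitive f (2 * C - x) ≤ mass f := by
  have h := H.two_point hf hC hx.1 (sub_nonneg.2 hx.2) (by norm_num : (0:ℝ) ≤ 1 / 2)
    (by norm_num) (by linarith)
  linarith

lemma setIntegral_primitive_le (H : IsUnbeatable C f) (hf : IsStrategy f) (hC : 0 < C) :
    ∫ x in Ioc 0 (2 * C), primitive f x ≤ C * mass f := by
  have hF := continuous_primitive (hf.integrable.integrableOn (s := Ioi 0))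
  have hFr : Continuous fun x => primitive f (2 * C - x) := hF.comp (continuous_sub_left _)
  have h2C : (0:ℝ) ≤ 2 * C := by linarith
  have hreflect :
      ∫ x in (0:ℝ)..2 * C, primitive f (2 * C - x) = ∫ x in (0:ℝ)..2 * C, primitive f x := by
    simp [intervalIntegral.integral_comp_sub_left]
  have hsum : ∫ x in (0:ℝ)..2 * C, (primitive f x + primitive f (2 * C - x))
      ≤ ∫ _ in (0:ℝ)..2 * C, mass f :=
    intervalIntegral.integral_mono_on h2C ((hF.add hFr).intervalIntegrable _ _)
      intervalIntegrable_const
      fun x hx => H.primitive_add_primitive_reflect_le hf hC hx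
  rw [intervalIntegral.integral_add (hF.intervalIntegrable _ _)
    (hFr.intervalIntegrable _ _), hreflect,
    intervalIntegral.integral_const, smul_eq_mul, sub_zero] at hsum
  rw [← intervalIntegral.integral_of_le h2C]
  linarith

lemma primitive_le_mul (H : IsUnbeatable C f) (hf : IsStrategy f) (hC : 0 < C)
    (hM : primitive f (2 * C) = mass f) {x : ℝ} (hx : x ∈ Icc 0 (2 * C)) :
    primitive f x ≤ mass f / (2 * C) * x := by
  rw [div_mul_eq_mul_div, le_div_iff₀ (by positivity)]
  -- pair `x` with `2 * C` (weight `C / (2 * C - x)`) or with `0` (weight `C / x`): mean exactly `C`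
  rcases le_total x C with hxC | hxC
  · have hpos : 0 < 2 * C - x := by linarith
    have hne : 2 * C - x ≠ 0 := hpos.ne'
    have h := H.two_point hf hC hx.1 (by linarith : (0:ℝ) ≤ 2 * C)
      (by positivity : 0 ≤ C / (2 * C - x)) ((div_le_one hpos).2 (by linarith))
      (le_of_eq (by linear_combination (-1 : ℝ) * div_mul_cancel₀ C hne))
    rw [hM] at h
    have e : (2 * C - x) * (C / (2 * C - x) * primitive f x + (1 - C / (2 * C - x)) * mass f)
        = C * primitive f x + (C - x) * mass f := by field_simp; ring
    nlinarith [mul_le_mul_of_nonneg_left h hpos.le, e]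
  · have hpos : 0 < x := by linarith
    have h := H.two_point hf hC hx.1 le_rfl (by positivity : 0 ≤ C / x) ((div_le_one hpos).2 hxC)
      (le_of_eq (by field_simp; ring))
    rw [primitive_of_nonpos le_rfl, mul_zero, add_zero] at h
    have e : x * (C / x * primitive f x) = C * primitive f x := by field_simp
    nlinarith [mul_le_mul_of_nonneg_left h hpos.le, e]

theorem ae_eq_uniform (H : IsUnbeatable C f) (hC : 0 < C) (hf : IsStrategy f)
    (hfC : mca f ≤ C) :
    ∃ c : ℝ, 0 < c ∧
      (∀ᵐ x ∂(volume.restrict (Icc (0:ℝ) (2*C))), f x = c) ∧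
      (∀ᵐ x ∂(volume.restrict (Ioi (2*C))), f x = 0) := by
  have hfi := hf.integrable.integrableOn (s := Ioi 0)
  have hF := continuous_primitive hfi
  have hI := H.setIntegral_primitive_le hf hC
  have htail := hf.ae_eq_zero_of_setIntegral_primitive_le hfC hC.le hI
  have hM : primitive f (2 * C) = mass f := by
    have h := mass_sub_primitive hfi (by linarith : (0:ℝ) ≤ 2 * C)
    rw [integral_congr_ae htail, integral_zero] at h
    linarith
  set c := mass f / (2 * C)
  have hlinI : ∫ x in Ioc 0 (2 * C), c * x = C * mass f := by
    rw [← intervalIntegral.integral_of_le (by linarith), intervalIntegral.integral_const_mul,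
      integral_id]
    simp only [c]
    field_simp
    ring
  have hlin : EqOn (primitive f) (fun x => c * x) (Icc 0 (2 * C)) :=
    eqOn_of_le_of_setIntegral_Ioc_eq (by linarith) hF.continuousOn (by fun_prop)
      (fun x hx => H.primitive_le_mul hf hC hM hx)
      (by rw [hlinI]; exact hI.antisymm (hf.mul_mass_le_setIntegral_primitive hfC hC.le))
  refine ⟨c, div_pos hf.mass_pos (by linarith), ?_, htail⟩
  refine ae_eq_of_intervalIntegral_eq_mul hf.integrable.locallyIntegrable fun x hx => ?_
  rw [← primitive_eq_intervalIntegral hx.1, hlin hx, sub_zero]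

end IsUnbeatable

theorem stmt0 (C : ℝ) (hC : 0 < C) (f : ℝ → ℝ) (hf : IsStrategy f) (hfC : mca f ≤ C) :
    (∀ g : ℝ → ℝ, IsStrategy g → mca g ≤ C → 0 ≤ wp f g) ↔
      ∃ c : ℝ, 0 < c ∧
        (∀ᵐ x ∂(volume.restrict (Icc (0:ℝ) (2*C))), f x = c) ∧
        (∀ᵐ x ∂(volume.restrict (Ioi (2*C))), f x = 0) := by
  refine ⟨fun H => IsUnbeatable.ae_eq_uniform H hC hf hfC, ?_⟩
  rintro ⟨c, hc, h1, h2⟩ g hg hgC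
  exact wp_nonneg_of_ae_eq_uniform hC.le hc.le hf.integrable.integrableOn h1 h2 hg hgC
end

section
/- Fix a constraint value C > 0 and let n ≥ 2. If f₁, …, fₙ are bounded measurable strategies such that for each k there is a constant cₖ > 0 with fₖ almost everywhere equal to cₖ on [0, 2C] and almost everywhere equal to 0 on (2C, ∞), then each fₖ is admissible and (f₁, …, fₙ) is an equilibrium point of the bounded measurable game; moreover the sum of any two such strategies is again a strategy of the same form. -/
open MeasureTheory Set

/-!
Against opponents whose total density equals `c ≥ 0` on `(0, 2C]` and vanishes beyond, a player at
`x > 0` has advantage `2c (min x (2C) - C) ≤ 2c (x - C)`. Integrating against a strategy `g` with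
`mca g ≤ C` therefore gives a payoff at most `2c (∫ t g(t) dt - C ∫ g) ≤ 0`, whereas a flat
strategy on `(0, 2C]` scores exactly `0`, since there the advantage is affine and odd about `C`.
-/

noncomputable def flatProfile (C c : ℝ) : ℝ → ℝ :=
  (Ioc 0 (2 * C)).indicator fun _ => c

noncomputable def advantage (g : ℝ → ℝ) (x : ℝ) : ℝ :=
  (∫ t in Ioc 0 x, g t) - ∫ t in Ioi x, g t

lemma wp_eq_integral_mul_advantage (f g : ℝ → ℝ) :
    wp f g = ∫ x in Ioi 0, f x * advantage g x := rfl

namespace IsStrategy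

variable {g : ℝ → ℝ}

lemma integrable_mul (hg : IsStrategy g) {φ : ℝ → ℝ} (hφ : Continuous φ) :
    Integrable fun x => φ x * g x := by
  obtain ⟨hm, ⟨M, hM⟩, hnn, ⟨R, hR⟩, -⟩ := hg
  have hsupp : Function.support (fun x => φ x * g x) ⊆ Icc 0 R :=
    (Function.support_mul_subset_right _ _).trans hR
  rw [← integrableOn_iff_integrable_of_support_subset hsupp]
  refine IntegrableOn.continuousOn_mul hφ.continuousOn ?_ isCompact_Icc
  refine Measure.integrableOn_of_bounded (M := M) measure_Icc_lt_top.ne hm.aestronglyMeasurable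
    (ae_of_all _ fun x => ?_)
  rw [Real.norm_of_nonneg (hnn x)]
  exact hM x

lemma integrable_s1 (hg : IsStrategy g) : Integrable g := by
  simpa using hg.integrable_mul continuous_const (φ := fun _ => 1)

lemma integral_Ioi_pos (hg : IsStrategy g) : 0 < ∫ x in Ioi 0, g x := by
  have hint := hg.integrable_s1
  obtain ⟨-, -, hnn, ⟨R, hR⟩, hne⟩ := hg
  have hzero : ∀ x ∉ Ici (0 : ℝ), g x = 0 := fun x hx =>
    Function.notMem_support.1 fun h => hx (hR h).1
  rw [← integral_Ici_eq_integral_Ioi, setIntegral_eq_integral_of_forall_compl_eq_zero hzero]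
  refine (integral_nonneg hnn).lt_of_ne fun h => hne ?_
  exact (integral_eq_zero_iff_of_nonneg hnn hint).1 h.symm

lemma moment_le_of_mca_le (hg : IsStrategy g) {C : ℝ} (hmca : mca g ≤ C) :
    ∫ x in Ioi 0, x * g x ≤ C * ∫ x in Ioi 0, g x :=
  (div_le_iff₀ hg.integral_Ioi_pos).1 hmca

lemma add {f : ℝ → ℝ} (hf : IsStrategy f) (hg : IsStrategy g) : IsStrategy (f + g) := by
  obtain ⟨hfm, ⟨Mf, hMf⟩, hfnn, ⟨Rf, hRf⟩, hfne⟩ := hf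
  obtain ⟨hgm, ⟨Mg, hMg⟩, hgnn, ⟨Rg, hRg⟩, -⟩ := hg
  refine ⟨hfm.add hgm, ⟨Mf + Mg, fun x => add_le_add (hMf x) (hMg x)⟩,
    fun x => add_nonneg (hfnn x) (hgnn x), ⟨max Rf Rg, ?_⟩, fun h => hfne ?_⟩
  · intro x hx
    rcases Function.support_add f g hx with h | h
    · exact ⟨(hRf h).1, (hRf h).2.trans (le_max_left _ _)⟩
    · exact ⟨(hRg h).1, (hRg h).2.trans (le_max_right _ _)⟩
  · filter_upwards [h] with x hx
    have : f x + g x = 0 := hx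
    show f x = 0
    linarith [hfnn x, hgnn x]

end IsStrategy

section flatProfile

variable {C c : ℝ}

lemma ae_eq_flatProfile {f : ℝ → ℝ} (hC : 0 ≤ C)
    (h₁ : ∀ᵐ x ∂(volume.restrict (Icc 0 (2 * C))), f x = c)
    (h₂ : ∀ᵐ x ∂(volume.restrict (Ioi (2 * C))), f x = 0) :
    f =ᵐ[volume.restrict (Ioi 0)] flatProfile C c := by
  rw [Filter.EventuallyEq, ← Ioc_union_Ioi_eq_Ioi (by linarith : (0 : ℝ) ≤ 2 * C),
    Measure.restrict_union (Ioc_disjoint_Ioi le_rfl) measurableSet_Ioi, ae_add_measure_iff]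
  constructor
  · filter_upwards [ae_restrict_of_ae_restrict_of_subset Ioc_subset_Icc_self h₁,
      ae_restrict_mem measurableSet_Ioc] with x hx hmem
    rw [hx, flatProfile, indicator_of_mem hmem]
  · filter_upwards [h₂, ae_restrict_mem measurableSet_Ioi] with x hx hmem
    rw [hx, flatProfile, indicator_of_notMem fun h => (not_le.2 hmem) h.2]

lemma integral_Ioc_flatProfile (hC : 0 ≤ C) {x : ℝ} (hx : 0 ≤ x) :
    ∫ t in Ioc 0 x, flatProfile C c t = c * min x (2 * C) := by
  rw [flatProfile, setIntegral_indicator measurableSet_Ioc, Ioc_inter_Ioc, setIntegral_const,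
    measureReal_def, Real.volume_Ioc, smul_eq_mul, sup_idem, sub_zero,
    ENNReal.toReal_ofReal (le_min hx (by linarith)), mul_comm]

lemma integral_Ioi_flatProfile {x : ℝ} (hx : 0 ≤ x) :
    ∫ t in Ioi x, flatProfile C c t = c * (2 * C - min x (2 * C)) := by
  rw [flatProfile, setIntegral_indicator measurableSet_Ioc, inter_comm, Ioc_inter_Ioi,
    setIntegral_const, measureReal_def, Real.volume_Ioc, smul_eq_mul, max_eq_right hx,
    mul_comm, ENNReal.toReal_ofReal']
  congr 1
  rcases le_total x (2 * C) with h | h <;> simp [h]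

lemma advantage_of_ae_eq_flatProfile (hC : 0 ≤ C) {h : ℝ → ℝ}
    (hh : h =ᵐ[volume.restrict (Ioi 0)] flatProfile C c) {x : ℝ} (hx : 0 < x) :
    advantage h x = 2 * c * (min x (2 * C) - C) := by
  rw [advantage,
    integral_congr_ae (ae_restrict_of_ae_restrict_of_subset Ioc_subset_Ioi_self hh),
    integral_congr_ae (ae_restrict_of_ae_restrict_of_subset (Ioi_subset_Ioi hx.le) hh),
    integral_Ioc_flatProfile hC hx.le, integral_Ioi_flatProfile hx.le]
  ring

lemma integral_flatProfile (hC : 0 ≤ C) : ∫ t in Ioi 0, flatProfile C c t = 2 * C * c := by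
  rw [integral_Ioi_flatProfile le_rfl, min_eq_left (by linarith)]
  ring

lemma integral_mul_flatProfile (hC : 0 ≤ C) :
    ∫ t in Ioi 0, t * flatProfile C c t = 2 * C ^ 2 * c := by
  have hmul : ∀ t, t * flatProfile C c t = (Ioc 0 (2 * C)).indicator (fun t => t * c) t :=
    fun t => (indicator_mul_right _ (fun t => t) _).symm
  rw [integral_congr_ae (ae_of_all _ hmul), setIntegral_indicator measurableSet_Ioc,
    inter_eq_right.2 Ioc_subset_Ioi_self, ← intervalIntegral.integral_of_le (by linarith),
    intervalIntegral.integral_mul_const, integral_id]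
  ring

lemma mca_of_ae_eq_flatProfile (hC : 0 < C) (hc : c ≠ 0) {f : ℝ → ℝ}
    (hf : f =ᵐ[volume.restrict (Ioi 0)] flatProfile C c) : mca f = C := by
  have hf' : (fun t => t * f t) =ᵐ[volume.restrict (Ioi 0)] fun t => t * flatProfile C c t := by
    filter_upwards [hf] with t ht
    rw [ht]
  rw [mca, integral_congr_ae hf, integral_congr_ae hf',
    integral_flatProfile hC.le, integral_mul_flatProfile hC.le]
  field_simp

lemma wp_nonpos_of_ae_eq_flatProfile (hC : 0 ≤ C) (hc : 0 ≤ c) {g h : ℝ → ℝ}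
    (hg : IsStrategy g) (hmca : mca g ≤ C)
    (hh : h =ᵐ[volume.restrict (Ioi 0)] flatProfile C c) : wp g h ≤ 0 := by
  have hint := hg.integrable_s1
  have hg_nonneg := hg.2.2.1
  have hint_id : Integrable fun x => x * g x := hg.integrable_mul continuous_id
  calc wp g h = ∫ x in Ioi 0, g x * (2 * c * (min x (2 * C) - C)) := by
        rw [wp_eq_integral_mul_advantage]
        exact setIntegral_congr_fun measurableSet_Ioi fun x hx => by
          rw [advantage_of_ae_eq_flatProfile hC hh hx]
    _ ≤ ∫ x in Ioi 0, 2 * c * (x * g x - C * g x) := by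
        refine setIntegral_mono_on ?_ ?_ measurableSet_Ioi fun x _ => ?_
        · have := hg.integrable_mul (φ := fun x => 2 * c * (min x (2 * C) - C)) (by fun_prop)
          simpa only [mul_comm (g _)] using this.integrableOn
        · exact ((hint_id.sub (hint.const_mul C)).const_mul _).integrableOn
        · nlinarith [min_le_left x (2 * C), mul_nonneg hc (hg_nonneg x)]
    _ = 2 * c * ((∫ x in Ioi 0, x * g x) - C * ∫ x in Ioi 0, g x) := by
        rw [integral_const_mul, integral_sub hint_id.integrableOn
          (hint.const_mul C).integrableOn, integral_const_mul]
    _ ≤ 0 := mul_nonpos_of_nonneg_of_nonpos (by positivity)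
        (sub_nonpos.2 (hg.moment_le_of_mca_le hmca))

lemma wp_eq_zero_of_ae_eq_flatProfile (hC : 0 ≤ C) {f h : ℝ → ℝ} {c' : ℝ}
    (hf : f =ᵐ[volume.restrict (Ioi 0)] flatProfile C c')
    (hh : h =ᵐ[volume.restrict (Ioi 0)] flatProfile C c) : wp f h = 0 := by
  calc wp f h = ∫ x in Ioi 0, flatProfile C c' x * (2 * c * (min x (2 * C) - C)) := by
        rw [wp_eq_integral_mul_advantage]
        refine integral_congr_ae ?_
        filter_upwards [hf, ae_restrict_mem measurableSet_Ioi] with x hfx hx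
        rw [hfx, advantage_of_ae_eq_flatProfile hC hh hx]
    _ = ∫ x in Ioc 0 (2 * C), c' * (2 * c * (x - C)) := by
        have hmul : ∀ x, flatProfile C c' x * (2 * c * (min x (2 * C) - C)) =
            (Ioc 0 (2 * C)).indicator (fun x => c' * (2 * c * (min x (2 * C) - C))) x :=
          fun x => (indicator_mul_left _ (fun _ => c') fun x => 2 * c * (min x (2 * C) - C)).symm
        rw [integral_congr_ae (ae_of_all _ hmul), setIntegral_indicator measurableSet_Ioc,
          inter_eq_right.2 Ioc_subset_Ioi_self]
        exact setIntegral_congr_fun measurableSet_Ioc fun x hx => by rw [min_eq_left hx.2]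
    _ = 0 := by
        rw [← intervalIntegral.integral_of_le (by linarith), intervalIntegral.integral_const_mul,
          intervalIntegral.integral_const_mul, intervalIntegral.integral_sub
            intervalIntegral.intervalIntegrable_id intervalIntegrable_const,
          integral_id, intervalIntegral.integral_const, smul_eq_mul]
        ring

lemma sum_ae_eq_flatProfile {ι : Type*} (s : Finset ι) {f : ι → ℝ → ℝ} {c : ι → ℝ}
    (hf : ∀ i ∈ s, f i =ᵐ[volume.restrict (Ioi 0)] flatProfile C (c i)) :
    (fun x => ∑ i ∈ s, f i x) =ᵐ[volume.restrict (Ioi 0)]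
      flatProfile C (∑ i ∈ s, c i) := by
  filter_upwards [(Filter.eventually_all_finset s).2 hf] with x hx
  rw [Finset.sum_congr rfl hx, flatProfile, ← Finset.sum_fn, Finset.indicator_sum,
    Finset.sum_apply]
  rfl

end flatProfile

theorem stmt1_general (C : ℝ) (hC : 0 < C) (n : ℕ) (f : Fin n → ℝ → ℝ)
    (hstrat : ∀ k, IsStrategy (f k))
    (hform : ∀ k, ∃ c : ℝ, 0 < c ∧
      (∀ᵐ x ∂(volume.restrict (Icc (0:ℝ) (2*C))), f k x = c) ∧
      (∀ᵐ x ∂(volume.restrict (Ioi (2*C))), f k x = 0)) :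
    (∀ k, mca (f k) ≤ C) ∧
    (∀ k, ∀ g : ℝ → ℝ, IsStrategy g → mca g ≤ C →
      wp g (fun x => ∑ ℓ ∈ Finset.univ.erase k, f ℓ x) ≤
        wp (f k) (fun x => ∑ ℓ ∈ Finset.univ.erase k, f ℓ x)) ∧
    (∀ j k, IsStrategy (f j + f k) ∧ ∃ c : ℝ, 0 < c ∧
      (∀ᵐ x ∂(volume.restrict (Icc (0:ℝ) (2*C))), (f j + f k) x = c) ∧
      (∀ᵐ x ∂(volume.restrict (Ioi (2*C))), (f j + f k) x = 0)) := by
  choose c hc hc_Icc hc_Ioi using hform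
  have hflat (k) : f k =ᵐ[volume.restrict (Ioi 0)] flatProfile C (c k) :=
    ae_eq_flatProfile hC.le (hc_Icc k) (hc_Ioi k)
  have hothers (k) := sum_ae_eq_flatProfile (Finset.univ.erase k) fun ℓ _ => hflat ℓ
  refine ⟨fun k => (mca_of_ae_eq_flatProfile hC (hc k).ne' (hflat k)).le,
    fun k g hg hmca => ?_, fun j k => ⟨(hstrat j).add (hstrat k), c j + c k,
      add_pos (hc j) (hc k), ?_, ?_⟩⟩
  · rw [wp_eq_zero_of_ae_eq_flatProfile hC.le (hflat k) (hothers k)]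
    exact wp_nonpos_of_ae_eq_flatProfile hC.le
      (Finset.sum_nonneg fun ℓ _ => (hc ℓ).le) hg hmca (hothers k)
  · filter_upwards [hc_Icc j, hc_Icc k] with x hj hk
    rw [Pi.add_apply, hj, hk]
  · filter_upwards [hc_Ioi j, hc_Ioi k] with x hj hk
    rw [Pi.add_apply, hj, hk, add_zero]

theorem stmt1 (C : ℝ) (hC : 0 < C) (n : ℕ) (hn : 2 ≤ n) (f : Fin n → ℝ → ℝ)
    (hstrat : ∀ k, IsStrategy (f k))
    (hform : ∀ k, ∃ c : ℝ, 0 < c ∧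
      (∀ᵐ x ∂(volume.restrict (Icc (0:ℝ) (2*C))), f k x = c) ∧
      (∀ᵐ x ∂(volume.restrict (Ioi (2*C))), f k x = 0)) :
    (∀ k, mca (f k) ≤ C) ∧
    (∀ k, ∀ g : ℝ → ℝ, IsStrategy g → mca g ≤ C →
      wp g (fun x => ∑ ℓ ∈ Finset.univ.erase k, f ℓ x) ≤
        wp (f k) (fun x => ∑ ℓ ∈ Finset.univ.erase k, f ℓ x)) ∧
    (∀ j k, IsStrategy (f j + f k) ∧ ∃ c : ℝ, 0 < c ∧
      (∀ᵐ x ∂(volume.restrict (Icc (0:ℝ) (2*C))), (f j + f k) x = c) ∧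
      (∀ᵐ x ∂(volume.restrict (Ioi (2*C))), (f j + f k) x = 0)) :=
  stmt1_general C hC n f hstrat hform
end

section
/- Fix a constraint value C > 0 and let n ≥ 2. No n-tuple (f₁, …, fₙ) of admissible continuous strategies is an equilibrium point of the continuous game; that is, the continuous game has no equilibrium points and hence no equilibrium strategies. -/
open MeasureTheory Set

/-- A continuous strategy: continuous on `[0, ∞)`, nonnegative there,
compactly supported, and not identically zero. -/
def IsCStrategy (f : ℝ → ℝ) : Prop :=
  ContinuousOn f (Ici 0) ∧ (∀ x ∈ Ici (0:ℝ), 0 ≤ f x) ∧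
  (∃ R : ℝ, ∀ x ∈ Ici (0:ℝ), R < x → f x = 0) ∧ (∃ x ∈ Ici (0:ℝ), f x ≠ 0)

/-!
Suppose the strategies form an equilibrium. Fix a player with strategy `f`, let `G` be the sum of
the other strategies and `ψ x = pointPayoff G x` the payoff of ability `x` against `G`, so that
`wp g G = ∫ g ψ`; `ψ` is nondecreasing with slope `2 G`. Since `2 f` and `f / 2` are admissible,
`wp f G = 0`, so no admissible strategy gains against `G`. Testing with two narrow bumps at
`u < C ≤ v` shows that every chord of `ψ` across `C` lies below `0` at `C`, so `ψ` lies below a line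
`L (x - C)`; as `∫ f (L (x - C) - ψ) = L (∫ x f - C ∫ f) ≤ 0`, `ψ` lies on that line wherever
`f > 0`. Now pick the player whose support reaches furthest, to `s`. Then `ψ s = ∫ G > 0` forces
`s > C` and `L > 0`, but just below `s`, where `f` is positive, `G` is nearly zero and `ψ` is nearly
flat.
-/

open Filter Topology

lemma integrableOn_Ioi_of_continuousOn_of_eq_zero {h : ℝ → ℝ} {R : ℝ}
    (hc : ContinuousOn h (Ici 0)) (hR : ∀ x ∈ Ici (0:ℝ), R < x → h x = 0) :
    IntegrableOn h (Ioi 0) := by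
  have hzero : IntegrableOn h (Ioi (max R 0)) :=
    integrableOn_zero.congr_fun (fun x hx => (hR x ((le_max_right R 0).trans hx.le)
      ((le_max_left R 0).trans_lt hx)).symm) measurableSet_Ioi
  refine (((hc.mono Icc_subset_Ici_self).integrableOn_Icc (b := max R 0)).union hzero).mono_set
    fun x hx => ?_
  rcases le_or_gt x (max R 0) with h | h
  exacts [Or.inl ⟨le_of_lt hx, h⟩, Or.inr h]

lemma setIntegral_pos_of_continuousOn {X : Type*} [TopologicalSpace X] [MeasurableSpace X]
    [OpensMeasurableSpace X] {μ : Measure X} [μ.IsOpenPosMeasure] {s : Set X} (hs : IsOpen s)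
    {h : X → ℝ} (hc : ContinuousOn h s) (hi : IntegrableOn h s μ) (h0 : ∀ x ∈ s, 0 ≤ h x)
    {x₀ : X} (hx₀ : x₀ ∈ s) (hne : h x₀ ≠ 0) : 0 < ∫ x in s, h x ∂μ := by
  rw [setIntegral_pos_iff_support_of_nonneg_ae ((ae_restrict_iff' hs.measurableSet).2
    (ae_of_all _ h0)) hi, Function.support_eq_preimage, inter_comm]
  exact (hc.isOpen_inter_preimage hs isOpen_compl_singleton).measure_pos μ ⟨x₀, hx₀, hne⟩

lemma exists_mem_Ioo_pos_of_continuousWithinAt {f : ℝ → ℝ} {x₀ b : ℝ}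
    (hc : ContinuousWithinAt f (Ici x₀) x₀) (hpos : 0 < f x₀) (hb : x₀ < b) :
    ∃ x ∈ Ioo x₀ b, 0 < f x := by
  have hev : ∀ᶠ x in 𝓝[>] x₀, 0 < f x :=
    (hc.mono Ioi_subset_Ici_self).eventually (lt_mem_nhds hpos)
  have hin : ∀ᶠ x in 𝓝[>] x₀, x ∈ Ioo x₀ b := Ioo_mem_nhdsGT hb
  exact (hin.and hev).exists

lemma exists_le_mul_sub_of_chord_nonpos {φ : ℝ → ℝ} {a c w : ℝ} (hac : a < c) (hcw : c < w)
    (h : ∀ u v, a ≤ u → u < c → c ≤ v → (v - c) * φ u + (c - u) * φ v ≤ 0) :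
    ∃ L, φ w / (w - c) ≤ L ∧ ∀ x, a ≤ x → φ x ≤ L * (x - c) := by
  set S := (fun v => φ v / (v - c)) '' Ioi c
  have hS : ∀ u, a ≤ u → u < c → ∀ y ∈ S, y ≤ -φ u / (c - u) := by
    rintro u hau huc _ ⟨v, hv, rfl⟩
    rw [div_le_div_iff₀ (sub_pos.2 hv) (sub_pos.2 huc)]
    nlinarith [h u v hau huc (le_of_lt hv)]
  have hw : φ w / (w - c) ∈ S := ⟨w, hcw, rfl⟩
  have hbdd : BddAbove S := ⟨-φ a / (c - a), hS a le_rfl hac⟩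
  refine ⟨sSup S, le_csSup hbdd hw, fun x hax => ?_⟩
  rcases lt_trichotomy x c with hxc | rfl | hcx
  · have hL := csSup_le ⟨_, hw⟩ (hS x hax hxc)
    rw [le_div_iff₀ (sub_pos.2 hxc)] at hL
    linarith
  · nlinarith [h a x le_rfl hac le_rfl]
  · exact (div_le_iff₀ (sub_pos.2 hcx)).1 (le_csSup hbdd ⟨x, hcx, rfl⟩)

noncomputable def moment (f : ℝ → ℝ) : ℝ := ∫ t in Ioi (0:ℝ), t * f t

lemma mca_le_iff {f : ℝ → ℝ} {C : ℝ} (hf : 0 < mass f) : mca f ≤ C ↔ moment f ≤ C * mass f :=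
  div_le_iff₀ hf

lemma mass_smul (c : ℝ) (f : ℝ → ℝ) : mass (c • f) = c * mass f :=
  integral_const_mul c f

lemma moment_smul (c : ℝ) (f : ℝ → ℝ) : moment (c • f) = c * moment f := by
  simp only [moment, Pi.smul_apply, smul_eq_mul, mul_left_comm _ c, integral_const_mul]

lemma mca_smul {c : ℝ} (hc : c ≠ 0) (f : ℝ → ℝ) : mca (c • f) = mca f :=
  (congr_arg₂ (· / ·) (moment_smul c f) (mass_smul c f)).trans (mul_div_mul_left _ _ hc)

lemma wp_smul (c : ℝ) (f G : ℝ → ℝ) : wp (c • f) G = c * wp f G := by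
  simp only [wp, Pi.smul_apply, smul_eq_mul, mul_assoc, integral_const_mul]

namespace IsCStrategy

variable {f g : ℝ → ℝ}

lemma nonneg (hf : IsCStrategy f) {x : ℝ} (hx : 0 ≤ x) : 0 ≤ f x := hf.2.1 x hx

lemma integrableOn_mul (hf : IsCStrategy f) {φ : ℝ → ℝ} (hφ : ContinuousOn φ (Ici 0)) :
    IntegrableOn (fun t => f t * φ t) (Ioi 0) := by
  obtain ⟨R, hR⟩ := hf.2.2.1
  exact integrableOn_Ioi_of_continuousOn_of_eq_zero (hf.1.mul hφ)
    fun x hx hRx => by rw [hR x hx hRx, zero_mul]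

lemma integrableOn (hf : IsCStrategy f) : IntegrableOn f (Ioi 0) := by
  simpa using hf.integrableOn_mul continuousOn_const (φ := fun _ => (1:ℝ))

lemma integrableOn_id_mul (hf : IsCStrategy f) : IntegrableOn (fun t => t * f t) (Ioi 0) :=
  (hf.integrableOn_mul continuousOn_id).congr_fun (fun _ _ => mul_comm _ _) measurableSet_Ioi

lemma add (hf : IsCStrategy f) (hg : IsCStrategy g) : IsCStrategy (f + g) := by
  obtain ⟨hfc, hf0, ⟨R, hR⟩, x₀, hx₀, hfx₀⟩ := hf
  obtain ⟨hgc, hg0, ⟨R', hR'⟩, -⟩ := hg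
  refine ⟨hfc.add hgc, fun x hx => add_nonneg (hf0 x hx) (hg0 x hx),
    ⟨max R R', fun x hx h => ?_⟩, x₀, hx₀, ?_⟩
  · simp [hR x hx ((le_max_left R R').trans_lt h), hR' x hx ((le_max_right R R').trans_lt h)]
  · exact (add_pos_of_pos_of_nonneg ((hf0 x₀ hx₀).lt_of_ne' hfx₀) (hg0 x₀ hx₀)).ne'

lemma smul (hf : IsCStrategy f) {c : ℝ} (hc : 0 < c) : IsCStrategy (c • f) := by
  obtain ⟨hfc, hf0, ⟨R, hR⟩, x₀, hx₀, hfx₀⟩ := hf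
  exact ⟨continuousOn_const.mul hfc, fun x hx => mul_nonneg hc.le (hf0 x hx),
    ⟨R, fun x hx h => by simp [hR x hx h]⟩, x₀, hx₀, mul_ne_zero hc.ne' hfx₀⟩

lemma exists_top (hf : IsCStrategy f) :
    ∃ s > 0, (∀ x, s ≤ x → f x = 0) ∧
      ∀ δ > 0, ∃ p q, s - δ < p ∧ p < q ∧ 0 < p ∧ 0 < f p ∧ 0 < f q := by
  have hpos : ∀ {x}, 0 ≤ x → f x ≠ 0 → 0 < f x := fun hx hne => (hf.nonneg hx).lt_of_ne' hne
  obtain ⟨hc, -, ⟨R, hR⟩, x₀, hx₀, hfx₀⟩ := hf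
  have hcw : ∀ {x}, 0 ≤ x → ContinuousWithinAt f (Ici x) x := fun hx =>
    (hc _ hx).mono (Ici_subset_Ici.2 hx)
  set S := {x : ℝ | 0 < x ∧ f x ≠ 0}
  have hbdd : BddAbove S := ⟨R, fun x hx => not_lt.1 fun h => hx.2 (hR x hx.1.le h)⟩
  obtain ⟨x₁, hx₁, hfx₁⟩ := exists_mem_Ioo_pos_of_continuousWithinAt (hcw hx₀) (hpos hx₀ hfx₀)
    (lt_add_one x₀)
  have hx₁S : x₁ ∈ S := ⟨hx₀.trans_lt hx₁.1, hfx₁.ne'⟩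
  have hs : 0 < sSup S := hx₁S.1.trans_le (le_csSup hbdd hx₁S)
  have hgt : ∀ x, sSup S < x → f x = 0 := fun x hx => by_contra fun hne =>
    (le_csSup hbdd ⟨hs.trans hx, hne⟩).not_gt hx
  have htop : f (sSup S) = 0 :=
    tendsto_nhds_unique ((hc _ hs.le).mono (Ioi_subset_Ici hs.le))
      (tendsto_const_nhds.congr' (eventually_nhdsWithin_of_forall fun x hx => (hgt x hx).symm))
  refine ⟨sSup S, hs, fun x hx => hx.eq_or_lt.elim (· ▸ htop) (hgt x), fun δ hδ => ?_⟩
  obtain ⟨p, ⟨hp0, hfp⟩, hp⟩ := exists_lt_of_lt_csSup ⟨x₁, hx₁S⟩ (sub_lt_self (sSup S) hδ)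
  obtain ⟨q, hq, hfq⟩ := exists_mem_Ioo_pos_of_continuousWithinAt (hcw hp0.le) (hpos hp0.le hfp)
    (lt_add_one p)
  exact ⟨p, q, hp, hq.1, hp0, hpos hp0.le hfp, hfq⟩

lemma mass_pos (hf : IsCStrategy f) : 0 < mass f := by
  obtain ⟨s, -, -, hacc⟩ := hf.exists_top
  obtain ⟨p, -, -, -, hp, hfp, -⟩ := hacc 1 one_pos
  exact setIntegral_pos_of_continuousOn isOpen_Ioi (hf.1.mono Ioi_subset_Ici_self) hf.integrableOn
    (fun x hx => hf.nonneg (le_of_lt hx)) hp hfp.ne'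

lemma mass_add (hf : IsCStrategy f) (hg : IsCStrategy g) : mass (f + g) = mass f + mass g :=
  integral_add hf.integrableOn hg.integrableOn

lemma moment_add (hf : IsCStrategy f) (hg : IsCStrategy g) :
    moment (f + g) = moment f + moment g := by
  simp only [moment, Pi.add_apply, mul_add]
  exact integral_add hf.integrableOn_id_mul hg.integrableOn_id_mul

end IsCStrategy

noncomputable def pointPayoff (G : ℝ → ℝ) (x : ℝ) : ℝ :=
  (∫ t in Ioc (0:ℝ) x, G t) - ∫ t in Ioi x, G t

lemma wp_eq_integral_mul_pointPayoff (f G : ℝ → ℝ) :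
    wp f G = ∫ x in Ioi (0:ℝ), f x * pointPayoff G x := rfl

section pointPayoff

variable {G : ℝ → ℝ}

lemma pointPayoff_eq (hG : IntegrableOn G (Ioi 0)) {x : ℝ} (hx : 0 ≤ x) :
    pointPayoff G x = mass G - 2 * ∫ t in Ioi x, G t := by
  rw [pointPayoff, mass, ← intervalIntegral.integral_of_le hx,
    ← intervalIntegral.integral_Ioi_sub_Ioi hG hx]
  ring

lemma continuousOn_pointPayoff (hG : IntegrableOn G (Ioi 0)) :
    ContinuousOn (pointPayoff G) (Ici 0) :=
  (continuousOn_const.sub (continuousOn_const.mul hG.continuousOn_Ici_primitive_Ioi)).congr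
    fun _ hx => pointPayoff_eq hG hx

lemma pointPayoff_sub (hG : IntegrableOn G (Ioi 0)) {x y : ℝ} (hx : 0 ≤ x) (hxy : x ≤ y) :
    pointPayoff G y - pointPayoff G x = 2 * ∫ t in x..y, G t := by
  rw [pointPayoff_eq hG hx, pointPayoff_eq hG (hx.trans hxy),
    ← intervalIntegral.integral_Ioi_sub_Ioi (hG.mono_set (Ioi_subset_Ioi hx)) hxy]
  ring

lemma monotoneOn_pointPayoff (hG : IntegrableOn G (Ioi 0)) (hG0 : ∀ x ∈ Ici (0:ℝ), 0 ≤ G x) :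
    MonotoneOn (pointPayoff G) (Ici 0) := fun _ hx _ _ hxy =>
  sub_nonneg.1 <| (pointPayoff_sub hG hx hxy).symm ▸
    mul_nonneg zero_le_two (intervalIntegral.integral_nonneg hxy fun t ht => hG0 t (hx.trans ht.1))

lemma pointPayoff_sub_le (hG : IntegrableOn G (Ioi 0)) {x y ε : ℝ} (hx : 0 ≤ x) (hxy : x ≤ y)
    (hε : ∀ t ∈ Icc x y, G t ≤ ε) :
    pointPayoff G y - pointPayoff G x ≤ 2 * ((y - x) * ε) := by
  have hGxy : IntervalIntegrable G volume x y :=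
    (intervalIntegrable_iff_integrableOn_Ioc_of_le hxy).2
      (hG.mono_set fun t ht => hx.trans_lt ht.1)
  rw [pointPayoff_sub hG hx hxy, ← smul_eq_mul (y - x), ← intervalIntegral.integral_const]
  gcongr
  exact intervalIntegral.integral_mono_on hxy hGxy intervalIntegrable_const hε

lemma pointPayoff_of_eq_zero (hG : IntegrableOn G (Ioi 0)) {s : ℝ} (hs : 0 ≤ s)
    (hGs : ∀ x, s < x → G x = 0) : pointPayoff G s = mass G := by
  rw [pointPayoff_eq hG hs, setIntegral_eq_zero_of_forall_eq_zero (t := Ioi s) fun x hx => hGs x hx]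
  ring

end pointPayoff

lemma exists_bump {x δ : ℝ} (hx : 0 ≤ x) (hδ : 0 < δ) :
    ∃ β : ℝ → ℝ, IsCStrategy β ∧ (∀ t ∉ Ioo x (x + δ), β t = 0) ∧ mass β = 1 := by
  let b : ContDiffBump (x + δ / 2) := ⟨δ / 4, δ / 2, by positivity, by linarith⟩
  have hsupp : Function.support (b.normed volume) = Ioo x (x + δ) := by
    rw [b.support_normed_eq, Real.ball_eq_Ioo]
    congr 1 <;> ring
  have hvan : ∀ t ∉ Ioo x (x + δ), b.normed volume t = 0 := fun t ht =>
    Function.notMem_support.1 (hsupp ▸ ht)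
  have hmid : b.normed volume (x + δ / 2) ≠ 0 :=
    Function.mem_support.1 (hsupp ▸ ⟨by linarith, by linarith⟩)
  refine ⟨b.normed volume, ⟨b.continuous_normed.continuousOn, fun t _ => b.nonneg_normed t,
    ⟨x + δ, fun t _ ht => hvan t fun h => h.2.not_gt ht⟩, x + δ / 2, mem_Ici.2 (by linarith), hmid⟩,
    hvan, ?_⟩
  rw [mass, setIntegral_eq_integral_of_forall_compl_eq_zero (s := Ioi 0) fun t ht =>
    hvan t fun h => ht (hx.trans_lt h.1), b.integral_normed]

namespace IsCStrategy

variable {f g G : ℝ → ℝ}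

lemma wp_add (hf : IsCStrategy f) (hg : IsCStrategy g) (hG : IntegrableOn G (Ioi 0)) :
    wp (f + g) G = wp f G + wp g G := by
  simp only [wp_eq_integral_mul_pointPayoff, Pi.add_apply, add_mul]
  exact integral_add (hf.integrableOn_mul (continuousOn_pointPayoff hG))
    (hg.integrableOn_mul (continuousOn_pointPayoff hG))

lemma moment_le (hf : IsCStrategy f) {y : ℝ} (hy : ∀ t, y < t → f t = 0) :
    moment f ≤ y * mass f := by
  rw [moment, mass, ← integral_const_mul]
  refine setIntegral_mono_on hf.integrableOn_id_mul (hf.integrableOn.const_mul y)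
    measurableSet_Ioi fun t ht => ?_
  rcases le_or_gt t y with h | h
  · exact mul_le_mul_of_nonneg_right h (hf.nonneg (le_of_lt ht))
  · simp [hy t h]

lemma pointPayoff_mul_mass_le_wp (hf : IsCStrategy f) (hG : IntegrableOn G (Ioi 0))
    (hG0 : ∀ x ∈ Ici (0:ℝ), 0 ≤ G x) {x : ℝ} (hx : 0 ≤ x) (hvan : ∀ t, t < x → f t = 0) :
    pointPayoff G x * mass f ≤ wp f G := by
  rw [wp_eq_integral_mul_pointPayoff, mass, ← integral_const_mul]
  refine setIntegral_mono_on (hf.integrableOn.const_mul _)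
    (hf.integrableOn_mul (continuousOn_pointPayoff hG)) measurableSet_Ioi fun t ht => ?_
  rcases lt_or_ge t x with h | h
  · simp [hvan t h]
  · rw [mul_comm]
    exact mul_le_mul_of_nonneg_left
      (monotoneOn_pointPayoff hG hG0 hx (mem_Ici.2 (le_of_lt ht)) h) (hf.nonneg (le_of_lt ht))

end IsCStrategy

def IsBestResponse (C : ℝ) (G f : ℝ → ℝ) : Prop :=
  IsCStrategy f ∧ mca f ≤ C ∧ ∀ g, IsCStrategy g → mca g ≤ C → wp g G ≤ wp f G

namespace IsBestResponse

variable {C : ℝ} {G f : ℝ → ℝ}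

lemma wp_eq_zero (hf : IsBestResponse C G f) : wp f G = 0 := by
  obtain ⟨hfs, hmca, hbest⟩ := hf
  have h : ∀ c : ℝ, 0 < c → c * wp f G ≤ wp f G := fun c hc =>
    wp_smul c f G ▸ hbest _ (hfs.smul hc) ((mca_smul hc.ne' f).symm ▸ hmca)
  linarith [h 2 two_pos, h 2⁻¹ (by norm_num)]

lemma wp_nonpos (hf : IsBestResponse C G f) {g : ℝ → ℝ} (hg : IsCStrategy g) (hmca : mca g ≤ C) :
    wp g G ≤ 0 :=
  (hf.2.2 g hg hmca).trans hf.wp_eq_zero.le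

lemma two_point_nonpos (hf : IsBestResponse C G f) (hG : IntegrableOn G (Ioi 0))
    (hG0 : ∀ x ∈ Ici (0:ℝ), 0 ≤ G x) {x₁ x₂ δ a b : ℝ} (hx₁ : 0 ≤ x₁) (hx₂ : 0 ≤ x₂)
    (hδ : 0 < δ) (ha : 0 < a) (hb : 0 < b) (hab : a * (x₁ + δ) + b * (x₂ + δ) ≤ C * (a + b)) :
    a * pointPayoff G x₁ + b * pointPayoff G x₂ ≤ 0 := by
  obtain ⟨β₁, hβ₁, hβ₁0, hβ₁m⟩ := exists_bump hx₁ hδ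
  obtain ⟨β₂, hβ₂, hβ₂0, hβ₂m⟩ := exists_bump hx₂ hδ
  have hmom₁ := hβ₁.moment_le fun t ht => hβ₁0 t fun h => h.2.not_gt ht
  have hmom₂ := hβ₂.moment_le fun t ht => hβ₂0 t fun h => h.2.not_gt ht
  have hψ₁ := hβ₁.pointPayoff_mul_mass_le_wp hG hG0 hx₁ fun t ht => hβ₁0 t fun h => h.1.not_gt ht
  have hψ₂ := hβ₂.pointPayoff_mul_mass_le_wp hG hG0 hx₂ fun t ht => hβ₂0 t fun h => h.1.not_gt ht
  rw [hβ₁m, mul_one] at hmom₁ hψ₁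
  rw [hβ₂m, mul_one] at hmom₂ hψ₂
  have hβ₁a := hβ₁.smul ha
  have hβ₂b := hβ₂.smul hb
  have hmass : mass (a • β₁ + b • β₂) = a + b := by
    rw [hβ₁a.mass_add hβ₂b, mass_smul, mass_smul, hβ₁m, hβ₂m, mul_one, mul_one]
  have hmca : mca (a • β₁ + b • β₂) ≤ C := by
    rw [mca_le_iff (hmass ▸ add_pos ha hb), hmass, hβ₁a.moment_add hβ₂b, moment_smul, moment_smul]
    nlinarith [mul_le_mul_of_nonneg_left hmom₁ ha.le, mul_le_mul_of_nonneg_left hmom₂ hb.le]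
  have hwp := hf.wp_nonpos (hβ₁a.add hβ₂b) hmca
  rw [hβ₁a.wp_add hβ₂b hG, wp_smul, wp_smul] at hwp
  nlinarith [mul_le_mul_of_nonneg_left hψ₁ ha.le, mul_le_mul_of_nonneg_left hψ₂ hb.le]

lemma chord_nonpos (hf : IsBestResponse C G f) (hG : IntegrableOn G (Ioi 0))
    (hG0 : ∀ x ∈ Ici (0:ℝ), 0 ≤ G x) {u v : ℝ} (hu : 0 ≤ u) (huC : u < C) (hCv : C ≤ v) :
    (v - C) * pointPayoff G u + (C - u) * pointPayoff G v ≤ 0 := by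
  set X := (v - C) * pointPayoff G u + (C - u) * pointPayoff G v
  set Y := pointPayoff G u - pointPayoff G v
  -- bumps of width `δ` raise the mean ability by at most `δ`; the weights absorb this exactly
  have key : ∀ δ ∈ Ioo 0 (C - u), X + δ * Y ≤ 0 := by
    rintro δ ⟨hδ, hδu⟩
    have h := hf.two_point_nonpos hG hG0 hu (hu.trans (huC.le.trans hCv)) hδ
      (a := v - C + δ) (b := C - u - δ) (by linarith) (by linarith) (le_of_eq (by ring))
    linarith
  have hlim : Tendsto (fun δ : ℝ => X + δ * Y) (𝓝[>] 0) (𝓝 X) := by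
    have h := ((show Continuous fun δ : ℝ => X + δ * Y by fun_prop).tendsto 0).mono_left
      (nhdsWithin_le_nhds (s := Ioi 0))
    rwa [zero_mul, add_zero] at h
  exact le_of_tendsto hlim (eventually_of_mem (Ioo_mem_nhdsGT (sub_pos.2 huC)) key)

lemma pointPayoff_eq_of_ne_zero (hf : IsBestResponse C G f) (hG : IntegrableOn G (Ioi 0))
    {L : ℝ} (hL : 0 ≤ L) (hline : ∀ x, 0 ≤ x → pointPayoff G x ≤ L * (x - C)) {x : ℝ}
    (hx : 0 < x) (hfx : f x ≠ 0) : pointPayoff G x = L * (x - C) := by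
  have hfs := hf.1
  have hψ := continuousOn_pointPayoff hG
  have hgap : ContinuousOn (fun t => L * (t - C) - pointPayoff G t) (Ici 0) :=
    (continuousOn_const.mul (continuousOn_id.sub continuousOn_const)).sub hψ
  have hint : ∫ t in Ioi (0:ℝ), f t * (L * (t - C) - pointPayoff G t) ≤ 0 := by
    have e : (fun t => f t * (L * (t - C) - pointPayoff G t)) =
        fun t => L * (t * f t - C * f t) - f t * pointPayoff G t := by
      ext t; ring
    have hCf : IntegrableOn (fun t => C * f t) (Ioi 0) := hfs.integrableOn.const_mul C
    have hLf : IntegrableOn (fun t => L * (t * f t - C * f t)) (Ioi 0) :=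
      (hfs.integrableOn_id_mul.sub hCf).const_mul L
    rw [e, integral_sub hLf (hfs.integrableOn_mul hψ), integral_const_mul,
      integral_sub hfs.integrableOn_id_mul hCf, integral_const_mul,
      ← wp_eq_integral_mul_pointPayoff, hf.wp_eq_zero]
    have hmom : moment f ≤ C * mass f := (mca_le_iff hfs.mass_pos).1 hf.2.1
    rw [moment, mass] at hmom
    nlinarith
  by_contra hne
  have hpos : 0 < f x * (L * (x - C) - pointPayoff G x) :=
    mul_pos ((hfs.nonneg hx.le).lt_of_ne' hfx) (sub_pos.2 ((hline x hx.le).lt_of_ne hne))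
  exact hint.not_gt (setIntegral_pos_of_continuousOn isOpen_Ioi
    ((hfs.1.mul hgap).mono Ioi_subset_Ici_self) (hfs.integrableOn_mul hgap)
    (fun t ht => mul_nonneg (hfs.nonneg (le_of_lt ht)) (sub_nonneg.2 (hline t (le_of_lt ht))))
    hx hpos.ne')

theorem false_of_pos_near_top (hC : 0 < C) (hf : IsBestResponse C G f) (hG : IsCStrategy G)
    {s : ℝ} (hs : 0 < s) (hGs : ∀ x, s ≤ x → G x = 0)
    (hacc : ∀ δ > 0, ∃ p q, s - δ < p ∧ p < q ∧ 0 < p ∧ 0 < f p ∧ 0 < f q) : False := by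
  have hGi := hG.integrableOn
  have hG0 : ∀ x ∈ Ici (0:ℝ), 0 ≤ G x := fun x hx => hG.nonneg hx
  have hchord := fun u v (hu : 0 ≤ u) (huC : u < C) (hCv : C ≤ v) =>
    hf.chord_nonpos hGi hG0 hu huC hCv
  have hψs : pointPayoff G s = mass G := pointPayoff_of_eq_zero hGi hs.le fun x hx => hGs x hx.le
  have hCs : C < s := by
    by_contra! hsC
    have := monotoneOn_pointPayoff hGi hG0 (mem_Ici.2 hs.le) (mem_Ici.2 hC.le) hsC
    nlinarith [hchord 0 C le_rfl hC le_rfl, hG.mass_pos]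
  obtain ⟨L, hLs, hline⟩ := exists_le_mul_sub_of_chord_nonpos hC hCs hchord
  have hL : 0 < L := (div_pos (hψs ▸ hG.mass_pos) (sub_pos.2 hCs)).trans_le hLs
  obtain ⟨δ, hδ, hsmall⟩ : ∃ δ > 0, ∀ t, s - δ < t → G t ≤ L / 4 := by
    have hev : ∀ᶠ t in 𝓝 s, G t < L / 4 := (hG.1.continuousAt (Ici_mem_nhds hs)).eventually
      (gt_mem_nhds (by rw [hGs s le_rfl]; exact div_pos hL four_pos))
    obtain ⟨δ, hδ, hball⟩ := Metric.eventually_nhds_iff.1 hev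
    refine ⟨δ, hδ, fun t ht => ?_⟩
    rcases lt_or_ge t s with h | h
    · exact (hball (by rw [Real.dist_eq, abs_sub_lt_iff]; constructor <;> linarith)).le
    · rw [hGs t h]
      exact (div_pos hL four_pos).le
  obtain ⟨p, q, hp, hpq, hp0, hfp, hfq⟩ := hacc δ hδ
  have hflat := pointPayoff_sub_le hGi hp0.le hpq.le fun t ht => hsmall t (hp.trans_le ht.1)
  rw [hf.pointPayoff_eq_of_ne_zero hGi hL.le hline (hp0.trans hpq) hfq.ne',
    hf.pointPayoff_eq_of_ne_zero hGi hL.le hline hp0 hfp.ne'] at hflat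
  nlinarith [mul_pos hL (sub_pos.2 hpq)]

end IsBestResponse

theorem stmt2 (C : ℝ) (hC : 0 < C) (n : ℕ) (hn : 2 ≤ n) :
    ¬ ∃ f : Fin n → ℝ → ℝ,
      (∀ k, IsCStrategy (f k) ∧ mca (f k) ≤ C) ∧
      (∀ k, ∀ g : ℝ → ℝ, IsCStrategy g → mca g ≤ C →
        wp g (fun x => ∑ ℓ ∈ Finset.univ.erase k, f ℓ x) ≤
          wp (f k) (fun x => ∑ ℓ ∈ Finset.univ.erase k, f ℓ x)) := by
  rintro ⟨f, hf, hbest⟩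
  choose s hs hvan hacc using fun k => (hf k).1.exists_top
  obtain ⟨k, -, hk⟩ := Finset.univ.exists_max_image s ⟨⟨0, by omega⟩, Finset.mem_univ _⟩
  have : Nontrivial (Fin n) := Fin.nontrivial_iff_two_le.2 hn
  obtain ⟨ℓ, hℓk⟩ := exists_ne k
  obtain ⟨p, -, -, -, hp, hfp, -⟩ := hacc ℓ 1 one_pos
  have hvan' : ∀ x, s k ≤ x → ∑ j ∈ Finset.univ.erase k, f j x = 0 := fun x hx =>
    Finset.sum_eq_zero fun j _ => hvan j x ((hk j (Finset.mem_univ j)).trans hx)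
  have hopp : IsCStrategy fun x => ∑ j ∈ Finset.univ.erase k, f j x :=
    ⟨continuousOn_finsetSum _ fun j _ => (hf j).1.1,
      fun x hx => Finset.sum_nonneg fun j _ => (hf j).1.nonneg hx,
      ⟨s k, fun x _ hx => hvan' x hx.le⟩, p, hp.le,
      (hfp.trans_le (Finset.single_le_sum (fun j _ => (hf j).1.nonneg hp.le)
        (Finset.mem_erase.2 ⟨hℓk, Finset.mem_univ ℓ⟩))).ne'⟩
  exact IsBestResponse.false_of_pos_near_top hC ⟨(hf k).1, (hf k).2, hbest k⟩ hopp (hs k) hvan'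
    (hacc k)
end

section
/- Fix a positive integer M and an odd positive integer k, and let the constraint value be C = k/(2M). A discrete strategy B with mca(B) ≤ C satisfies wp(B; B') ≥ 0 for every discrete strategy B' with mca(B') ≤ C if and only if there exists a constant c > 0 such that B(j) = c for all 0 ≤ j ≤ k and B(j) = 0 for all j > k. -/
open Set

/-- A discrete strategy: a nonnegative finitely supported function on `ℕ`
with positive total mass `|A| = Σ_j A(j)`. -/
def IsDStrategy (A : ℕ → ℝ) : Prop :=
  (∀ j, 0 ≤ A j) ∧ (Function.support A).Finite ∧ 0 < ∑ᶠ j, A j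

/-- Mean competitive ability on the grid `{j/M : j ∈ ℕ}`:
`mcaD M A = (Σ_j (j/M) A(j)) / (Σ_j A(j))`. -/
noncomputable def mcaD (M : ℕ) (A : ℕ → ℝ) : ℝ :=
  (∑ᶠ j : ℕ, ((j : ℝ) / M) * A j) / (∑ᶠ j : ℕ, A j)

/-- Discrete payoff `wpD A B = Σ_j A(j) (Σ_{i<j} B(i) − Σ_{i>j} B(i))`. -/
noncomputable def wpD (A B : ℕ → ℝ) : ℝ :=
  ∑ᶠ j : ℕ, A j * ((∑ᶠ i ∈ Iio j, B i) - ∑ᶠ i ∈ Ioi j, B i)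

/-!
Write `wpPure B j` for the payoff of the pure strategy `j` against `B`, so that
`wpD A B = Σ j, A j * wpPure B j`, and `wpD` is antisymmetric.

Testing an unbeatable `B` against two-point strategies whose mean is exactly `k / 2M` yields a
Lagrange multiplier `c > 0` with `wpPure B j ≤ c (2j - k)` for every `j`. As `wpD B B = 0`,
equality holds on the support of `B` and the mean of `B` is exactly `k / 2M`. Summed over an
initial segment, `wpPure B j - c (2j - k)` has a closed form, which shows first that `B`
vanishes beyond `k` and then that equality holds on all of `[0, k]`. Its increments then give
`B j + B (j + 1) = 2c` there, and since `k` is odd while `B 0 = B k`, `B` is constant.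
Conversely, for the uniform strategy `wpPure B j ≤ c (2j - k)`, so the mean constraint on the
opponent makes its payoff nonpositive.
-/

open Finset

noncomputable def wpPure (B : ℕ → ℝ) (j : ℕ) : ℝ :=
  (∑ᶠ i ∈ Set.Iio j, B i) - ∑ᶠ i ∈ Set.Ioi j, B i

section Vanishing

variable {f A B : ℕ → ℝ} {n : ℕ}

theorem finsum_eq_sum_range (hf : ∀ j, n ≤ j → f j = 0) : ∑ᶠ j, f j = ∑ j ∈ range n, f j :=
  finsum_eq_finsetSum_of_support_subset f fun j hj ↦ by
    simpa using mt (hf j) hj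

theorem sum_range_eq_of_le (hf : ∀ j, n ≤ j → f j = 0) {m : ℕ} (hm : n ≤ m) :
    ∑ j ∈ range m, f j = ∑ j ∈ range n, f j :=
  (sum_subset (range_subset_range.2 hm) fun j hj hjn ↦ hf j (by simpa using hjn)).symm

theorem support_finite_of_forall_ge (hf : ∀ j, n ≤ j → f j = 0) : (Function.support f).Finite :=
  (finite_Iio n).subset fun j hj ↦ by simpa using mt (hf j) hj

theorem exists_forall_ge_eq_zero (hf : (Function.support f).Finite) (m : ℕ) :
    ∃ n, m ≤ n ∧ ∀ j, n ≤ j → f j = 0 := by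
  obtain ⟨u, hu⟩ := hf.bddAbove
  exact ⟨max m (u + 1), le_max_left _ _, fun j hj ↦ by_contra fun h ↦ by have := hu h; omega⟩

theorem isDStrategy_of_forall_ge (h0 : ∀ j, 0 ≤ A j) (hA : ∀ j, n ≤ j → A j = 0)
    (hpos : 0 < ∑ j ∈ range n, A j) : IsDStrategy A :=
  ⟨h0, support_finite_of_forall_ge hA, by rwa [finsum_eq_sum_range hA]⟩

theorem mcaD_le_div_iff {M : ℕ} (hM : 0 < M) (hA : ∀ j, n ≤ j → A j = 0)
    (hpos : 0 < ∑ j ∈ range n, A j) (x : ℝ) :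
    mcaD M A ≤ x / (2 * M) ↔ ∑ j ∈ range n, (2 * j - x) * A j ≤ 0 := by
  have hM' : (0 : ℝ) < M := Nat.cast_pos.2 hM
  have key : (∑ j ∈ range n, (j / M : ℝ) * A j) * (2 * M) - x * ∑ j ∈ range n, A j
      = ∑ j ∈ range n, (2 * j - x) * A j := by
    rw [sum_mul, mul_sum, ← sum_sub_distrib]
    exact sum_congr rfl fun j _ ↦ by field_simp
  rw [mcaD, finsum_eq_sum_range hA, finsum_eq_sum_range (f := fun j ↦ (j / M : ℝ) * A j)
    fun j hj ↦ by simp [hA j hj], div_le_div_iff₀ hpos (by positivity), ← sub_nonpos, key]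

theorem wpPure_eq (hB : ∀ j, n ≤ j → B j = 0) (j : ℕ) :
    wpPure B j = 2 * ∑ i ∈ range j, B i + B j - ∑ i ∈ range n, B i := by
  have hfin := support_finite_of_forall_ge hB
  have hsplit := finsum_mem_union' (f := B) (Set.Iic_disjoint_Ioi (le_refl j))
    (hfin.subset inter_subset_right) (hfin.subset inter_subset_right)
  rw [Iic_union_Ioi, finsum_mem_univ, finsum_eq_sum_range hB] at hsplit
  have hIic : ∑ᶠ i ∈ Set.Iic j, B i = ∑ i ∈ range j, B i + B j := by
    rw [← sum_range_succ, ← finsum_mem_coe_finset, coe_range, Set.Iio_add_one_eq_Iic]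
  have hIio : ∑ᶠ i ∈ Set.Iio j, B i = ∑ i ∈ range j, B i := by
    rw [← finsum_mem_coe_finset, coe_range]
  rw [wpPure, hIio]
  linarith

theorem wpD_eq_sum_range (hA : ∀ j, n ≤ j → A j = 0) (B : ℕ → ℝ) :
    wpD A B = ∑ j ∈ range n, A j * wpPure B j :=
  finsum_eq_sum_range (f := fun j ↦ A j * wpPure B j) fun j hj ↦ by simp [hA j hj]

theorem wpD_add_wpD_swap (hA : ∀ j, n ≤ j → A j = 0) (hB : ∀ j, n ≤ j → B j = 0) :
    wpD A B + wpD B A = 0 := by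
  set P := fun j ↦ (∑ i ∈ range j, A i) * ∑ i ∈ range j, B i
  have hstep (j : ℕ) : A j * wpPure B j + B j * wpPure A j
      = 2 * (P (j + 1) - P j) - A j * ∑ i ∈ range n, B i - B j * ∑ i ∈ range n, A i := by
    simp only [P, wpPure_eq hA, wpPure_eq hB, sum_range_succ]
    ring
  rw [wpD_eq_sum_range hA, wpD_eq_sum_range hB, ← sum_add_distrib, sum_congr rfl fun j _ ↦ hstep j,
    sum_sub_distrib, sum_sub_distrib, ← mul_sum, sum_range_sub, ← sum_mul, ← sum_mul]
  simp only [P, sum_range_zero]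
  ring

theorem wpPure_succ_sub (hB : ∀ j, n ≤ j → B j = 0) (j : ℕ) :
    wpPure B (j + 1) - wpPure B j = B j + B (j + 1) := by
  simp only [wpPure_eq hB, sum_range_succ]
  ring

end Vanishing

theorem sum_range_two_mul_sub (x : ℝ) (n : ℕ) :
    ∑ j ∈ range n, (2 * (j : ℝ) - x) = n * (n - 1 - x) := by
  induction n with
  | zero => simp
  | succ n ih => rw [sum_range_succ, ih]; push_cast; ring

theorem sum_range_two_mul_sum_range_add (B : ℕ → ℝ) (n : ℕ) :
    ∑ j ∈ range n, (2 * ∑ i ∈ range j, B i + B j)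
      = ∑ i ∈ range n, (2 * n - 1 - 2 * i) * B i := by
  induction n with
  | zero => simp
  | succ n ih =>
    have hshift : ∑ i ∈ range n, (2 * ((n + 1 : ℕ) : ℝ) - 1 - 2 * i) * B i
        = ∑ i ∈ range n, (2 * n - 1 - 2 * i) * B i + 2 * ∑ i ∈ range n, B i := by
      rw [mul_sum, ← sum_add_distrib]
      exact sum_congr rfl fun i _ ↦ by push_cast; ring
    rw [sum_range_succ, ih, sum_range_succ _ n, hshift]
    push_cast
    ring

theorem sum_range_wpPure_sub {B : ℕ → ℝ} {n : ℕ} (hB : ∀ j, n ≤ j → B j = 0) {x : ℝ}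
    (hmean : ∑ j ∈ range n, (2 * j - x) * B j = 0) (c : ℝ) :
    ∑ j ∈ range n, (wpPure B j - c * (2 * j - x))
      = (n - 1 - x) * (∑ j ∈ range n, B j - c * n) := by
  have hweights : ∑ i ∈ range n, (2 * n - 1 - 2 * i) * B i
      = (2 * n - 1 - x) * ∑ j ∈ range n, B j := by
    rw [← sub_zero ((2 * n - 1 - x) * _), ← hmean, mul_sum, ← sum_sub_distrib]
    exact sum_congr rfl fun i _ ↦ by ring
  simp only [wpPure_eq hB]
  rw [sum_sub_distrib, sum_sub_distrib, ← mul_sum, sum_range_two_mul_sub,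
    sum_range_two_mul_sum_range_add, hweights, sum_const, card_range, nsmul_eq_mul]
  ring

theorem exists_le_mul_of_pair_le {k : ℕ} (hk : Odd k) (g : ℕ → ℝ)
    (h : ∀ i j : ℕ, 2 * i < k → k < 2 * j → (2 * j - k : ℝ) * g i + (k - 2 * i) * g j ≤ 0) :
    ∃ c : ℝ, ∀ j, g j ≤ c * (2 * j - k) := by
  have hgap (i : ℕ) (hi : 2 * i < k) : (0 : ℝ) < k - 2 * i := sub_pos.2 (by exact_mod_cast hi)
  obtain ⟨i₀, hi₀, hmin⟩ := ((range k).filter (2 * · < k)).exists_min_image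
    (fun i ↦ -g i / (k - 2 * i)) ⟨0, by simpa using hk.pos⟩
  have hi₀k : 2 * i₀ < k := (mem_filter.1 hi₀).2
  set c := -g i₀ / (k - 2 * i₀)
  have hgi₀ : g i₀ = c * (2 * i₀ - k) := by
    linarith [div_mul_cancel₀ (-g i₀) (hgap i₀ hi₀k).ne']
  refine ⟨c, fun j ↦ ?_⟩
  rcases lt_or_gt_of_ne (show 2 * j ≠ k by obtain ⟨m, rfl⟩ := hk; omega) with hj | hj
  · have := (le_div_iff₀ (hgap j hj)).1 (hmin j (mem_filter.2 ⟨mem_range.2 (by omega), hj⟩))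
    linarith
  · refine le_of_mul_le_mul_left ?_ (hgap i₀ hi₀k)
    linear_combination h i₀ j hi₀k hj - (2 * j - k : ℝ) * hgi₀

theorem exists_last_ne_zero {f : ℕ → ℝ} {n j : ℕ} (hf : ∀ i, n ≤ i → f i = 0) (hj : f j ≠ 0) :
    ∃ b, j ≤ b ∧ f b ≠ 0 ∧ ∀ i, b < i → f i = 0 := by
  have hjn : j ≤ n := by by_contra h; exact hj (hf j (by omega))
  refine ⟨Nat.findGreatest (f · ≠ 0) n, Nat.le_findGreatest hjn hj,
    Nat.findGreatest_spec (P := (f · ≠ 0)) hjn hj, fun i hi ↦ ?_⟩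
  by_cases hin : i ≤ n
  · exact not_not.1 (Nat.findGreatest_is_greatest hi hin)
  · exact hf i (by omega)

theorem wpPure_pair_le {M k n : ℕ} {B : ℕ → ℝ} (hM : 0 < M) (hB : ∀ j, n ≤ j → B j = 0)
    (hunb : ∀ B', IsDStrategy B' → mcaD M B' ≤ k / (2 * M) → 0 ≤ wpD B B') {i j : ℕ}
    (hi : 2 * i < k) (hj : k < 2 * j) :
    (2 * j - k : ℝ) * wpPure B i + (k - 2 * i) * wpPure B j ≤ 0 := by
  have hwj : (0 : ℝ) < 2 * j - k := sub_pos.2 (by exact_mod_cast hj)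
  have hwi : (0 : ℝ) < k - 2 * i := sub_pos.2 (by exact_mod_cast hi)
  set D : ℕ → ℝ := Pi.single i (2 * j - k : ℝ) + Pi.single j (k - 2 * i : ℝ)
  set N := max n (j + 1)
  have hD : ∀ l, N ≤ l → D l = 0 := fun l hl ↦ by
    simp [D, show l ≠ i by omega, show l ≠ j by omega]
  have hsum (f : ℕ → ℝ) : ∑ l ∈ range N, D l * f l = (2 * j - k) * f i + (k - 2 * i) * f j := by
    simp [D, add_mul, sum_add_distrib, Pi.single_apply, show i < N by omega, show j < N by omega]
  have hpos : 0 < ∑ l ∈ range N, D l := by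
    have h1 := hsum 1
    simp only [Pi.one_apply, mul_one] at h1
    linarith
  have hBN : ∀ l, N ≤ l → B l = 0 := fun l hl ↦ hB l (le_of_max_le_left hl)
  have hD0 : 0 ≤ D := add_nonneg (Pi.single_nonneg.2 hwj.le) (Pi.single_nonneg.2 hwi.le)
  have hDstrat : IsDStrategy D := isDStrategy_of_forall_ge hD0 hD hpos
  have hmca : mcaD M D ≤ k / (2 * M) := by
    rw [mcaD_le_div_iff hM hD hpos, sum_congr rfl fun l _ ↦ mul_comm _ (D l), hsum]
    exact le_of_eq (by ring)
  have hplay := hunb D hDstrat hmca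
  rw [← hsum]
  linarith [wpD_add_wpD_swap hBN hD, wpD_eq_sum_range hD B]

section Equilibrium

variable {B : ℕ → ℝ} {c : ℝ}

theorem mean_eq_zero_and_wpPure_eq_of_ne_zero {n : ℕ} {x : ℝ} (h0 : ∀ j, 0 ≤ B j)
    (hB : ∀ j, n ≤ j → B j = 0) (hc : 0 < c) (hle : ∀ j, wpPure B j ≤ c * (2 * j - x))
    (hmean : ∑ j ∈ range n, (2 * j - x) * B j ≤ 0) :
    ∑ j ∈ range n, (2 * j - x) * B j = 0 ∧ ∀ j, B j ≠ 0 → wpPure B j = c * (2 * j - x) := by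
  have hself : ∑ j ∈ range n, B j * wpPure B j = 0 := by
    linarith [wpD_add_wpD_swap hB hB, wpD_eq_sum_range hB B]
  have hsplit : ∑ j ∈ range n, B j * wpPure B j
      = ∑ j ∈ range n, B j * (wpPure B j - c * (2 * j - x))
        + c * ∑ j ∈ range n, (2 * j - x) * B j := by
    rw [mul_sum, ← sum_add_distrib]
    exact sum_congr rfl fun j _ ↦ by ring
  have hterm (j : ℕ) : B j * (wpPure B j - c * (2 * j - x)) ≤ 0 :=
    mul_nonpos_of_nonneg_of_nonpos (h0 j) (sub_nonpos.2 (hle j))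
  have hgap : ∑ j ∈ range n, B j * (wpPure B j - c * (2 * j - x)) ≤ 0 :=
    sum_nonpos fun j _ ↦ hterm j
  have hcmean : c * ∑ j ∈ range n, (2 * j - x) * B j = 0 := by
    linarith [mul_nonpos_of_nonneg_of_nonpos hc.le hmean]
  refine ⟨(mul_eq_zero.1 hcmean).resolve_left hc.ne', fun j hj ↦ ?_⟩
  have hjn : j < n := by by_contra h; exact hj (hB j (by omega))
  have hzero := (sum_eq_zero_iff_of_nonpos fun j _ ↦ hterm j).1 (by linarith) j (mem_range.2 hjn)
  linarith [(mul_eq_zero.1 hzero).resolve_left hj]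

theorem forall_gt_eq_zero_of_wpPure_le {n k : ℕ} (h0 : ∀ j, 0 ≤ B j) (hB : ∀ j, n ≤ j → B j = 0)
    (hc : 0 < c) (hle : ∀ j, wpPure B j ≤ c * (2 * j - k))
    (hmean : ∑ j ∈ range n, (2 * j - k) * B j = 0)
    (hsupp : ∀ j, B j ≠ 0 → wpPure B j = c * (2 * j - k)) :
    ∀ j, k < j → B j = 0 := by
  by_contra! ⟨j, hkj, hj⟩
  obtain ⟨b, hjb, hb, hlast⟩ := exists_last_ne_zero hB hj
  have hbn : b + 1 ≤ n := by by_contra h; exact hb (hB b (by omega))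
  have hBb : ∀ i, b + 1 ≤ i → B i = 0 := hlast
  have hmean' : ∑ i ∈ range (b + 1), (2 * i - k : ℝ) * B i = 0 := by
    rwa [← sum_range_eq_of_le (fun i hi ↦ by simp [hBb i hi]) hbn]
  have hsum := sum_range_wpPure_sub hBb hmean' c
  have hnonpos : ∑ i ∈ range (b + 1), (wpPure B i - c * (2 * i - k)) ≤ 0 :=
    sum_nonpos fun i _ ↦ sub_nonpos.2 (hle i)
  have hkb : (k : ℝ) + 1 ≤ b := by exact_mod_cast (show k + 1 ≤ b by omega)
  have hmass : ∑ i ∈ range (b + 1), B i ≤ c * (b + 1) := by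
    rw [hsum] at hnonpos
    push_cast at hnonpos
    nlinarith
  have hwb : ∑ i ∈ range b, B i = c * (2 * b - k) := by
    have := hsupp b hb
    rw [wpPure_eq hBb, sum_range_succ] at this
    linarith
  rw [sum_range_succ, hwb] at hmass
  nlinarith [lt_of_le_of_ne (h0 b) (Ne.symm hb)]

theorem wpPure_eq_of_le {k : ℕ} (hB : ∀ j, k + 1 ≤ j → B j = 0)
    (hmean : ∑ j ∈ range (k + 1), (2 * j - k : ℝ) * B j = 0)
    (hle : ∀ j, wpPure B j ≤ c * (2 * j - k)) :
    ∀ j ≤ k, wpPure B j = c * (2 * j - k) := by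
  have hsum := sum_range_wpPure_sub hB hmean c
  push_cast at hsum
  rw [show ((k : ℝ) + 1 - 1 - k) = 0 by ring, zero_mul,
    sum_eq_zero_iff_of_nonpos fun i _ ↦ sub_nonpos.2 (hle i)] at hsum
  exact fun j hj ↦ sub_eq_zero.1 (hsum j (mem_range.2 (by omega)))

theorem eq_of_wpPure_eq {k : ℕ} (hk : Odd k) (hB : ∀ j, k + 1 ≤ j → B j = 0)
    (h : ∀ j ≤ k, wpPure B j = c * (2 * j - k)) :
    ∀ j ≤ k, B j = c := by
  have hpair (j : ℕ) (hj : j < k) : B j + B (j + 1) = 2 * c := by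
    have := wpPure_succ_sub hB j
    rw [h j hj.le, h (j + 1) hj] at this
    push_cast at this
    linarith
  have halt : ∀ j ≤ k, B j - c = (-1) ^ j * (B 0 - c) := by
    intro j hj
    induction j with
    | zero => simp
    | succ j ih =>
      rw [pow_succ]
      linear_combination hpair j (by omega) - ih (by omega)
  have hends : B 0 = B k := by
    have h0 := h 0 (Nat.zero_le k)
    have hk' := h k le_rfl
    rw [wpPure_eq hB] at h0 hk'
    rw [sum_range_succ] at h0 hk'
    simp only [sum_range_zero] at h0
    push_cast at h0
    linarith
  have hB0 : B 0 = c := by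
    have := halt k le_rfl
    rw [hk.neg_one_pow, ← hends] at this
    linarith
  intro j hj
  rw [← sub_eq_zero, halt j hj, hB0, sub_self, mul_zero]

theorem wpPure_le_of_eq_const {k : ℕ} (hc : 0 ≤ c) (hle : ∀ j ≤ k, B j = c)
    (hgt : ∀ j > k, B j = 0) (j : ℕ) : wpPure B j ≤ c * (2 * j - k) := by
  have hB : ∀ i, k + 1 ≤ i → B i = 0 := hgt
  have hS : ∀ m ≤ k + 1, ∑ i ∈ range m, B i = m * c := fun m hm ↦ by
    rw [sum_congr rfl fun i hi ↦ hle i (by rw [Finset.mem_range] at hi; omega), sum_const,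
      card_range, nsmul_eq_mul]
  rw [wpPure_eq hB, hS (k + 1) le_rfl]
  rcases le_or_gt j k with hj | hj
  · rw [hS j (by omega), hle j hj]
    push_cast
    linarith
  · have hkj : (k : ℝ) + 1 ≤ j := by exact_mod_cast hj
    rw [sum_range_eq_of_le hB hj, hS (k + 1) le_rfl, hgt j hj]
    push_cast
    nlinarith

end Equilibrium

theorem eq_const_of_unbeatable {M k : ℕ} {B : ℕ → ℝ} (hM : 0 < M) (hk : Odd k)
    (hB : IsDStrategy B) (hBC : mcaD M B ≤ k / (2 * M))
    (hunb : ∀ B', IsDStrategy B' → mcaD M B' ≤ k / (2 * M) → 0 ≤ wpD B B') :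
    ∃ c : ℝ, 0 < c ∧ (∀ j ≤ k, B j = c) ∧ (∀ j > k, B j = 0) := by
  obtain ⟨h0, hfin, htot⟩ := hB
  obtain ⟨n, hkn, hBn⟩ := exists_forall_ge_eq_zero hfin (k + 1)
  have hT : 0 < ∑ j ∈ range n, B j := by rwa [finsum_eq_sum_range hBn] at htot
  obtain ⟨c, hle⟩ := exists_le_mul_of_pair_le hk (wpPure B)
    fun i j hi hj ↦ wpPure_pair_le hM hBn hunb hi hj
  have hc : 0 < c := by
    have hwn := hle n
    rw [wpPure_eq hBn, hBn n le_rfl] at hwn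
    have hkn' : (k : ℝ) + 1 ≤ n := by exact_mod_cast hkn
    nlinarith
  obtain ⟨hmean, hsupp⟩ := mean_eq_zero_and_wpPure_eq_of_ne_zero h0 hBn hc hle
    ((mcaD_le_div_iff hM hBn hT k).1 hBC)
  have hgt := forall_gt_eq_zero_of_wpPure_le h0 hBn hc hle hmean hsupp
  have hBk : ∀ j, k + 1 ≤ j → B j = 0 := hgt
  have hmeank : ∑ j ∈ range (k + 1), (2 * j - k : ℝ) * B j = 0 := by
    rwa [← sum_range_eq_of_le (fun j hj ↦ by simp [hBk j hj]) hkn]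
  exact ⟨c, hc, eq_of_wpPure_eq hk hBk (wpPure_eq_of_le hBk hmeank hle), hgt⟩

theorem unbeatable_of_eq_const {M k : ℕ} {B : ℕ → ℝ} {c : ℝ} (hM : 0 < M) (hc : 0 ≤ c)
    (hle : ∀ j ≤ k, B j = c) (hgt : ∀ j > k, B j = 0) :
    ∀ B', IsDStrategy B' → mcaD M B' ≤ k / (2 * M) → 0 ≤ wpD B B' := by
  rintro B' ⟨h0', hfin', htot'⟩ hB'C
  obtain ⟨n, hkn, hB'n⟩ := exists_forall_ge_eq_zero hfin' (k + 1)
  have hBn : ∀ j, n ≤ j → B j = 0 := fun j hj ↦ hgt j (by omega)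
  have hT' : 0 < ∑ j ∈ range n, B' j := by rwa [finsum_eq_sum_range hB'n] at htot'
  have hmean := (mcaD_le_div_iff hM hB'n hT' k).1 hB'C
  have hpayoff : wpD B' B ≤ c * ∑ j ∈ range n, (2 * j - k) * B' j := by
    rw [wpD_eq_sum_range hB'n, mul_sum]
    refine sum_le_sum fun j _ ↦ ?_
    calc B' j * wpPure B j ≤ B' j * (c * (2 * j - k)) :=
          mul_le_mul_of_nonneg_left (wpPure_le_of_eq_const hc hle hgt j) (h0' j)
      _ = c * ((2 * j - k) * B' j) := by ring
  linarith [wpD_add_wpD_swap hBn hB'n, mul_nonpos_of_nonneg_of_nonpos hc hmean]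

theorem stmt3_general (M k : ℕ) (hM : 0 < M) (hodd : Odd k)
    (C : ℝ) (hC : C = (k : ℝ) / (2 * M))
    (B : ℕ → ℝ) (hB : IsDStrategy B) (hBC : mcaD M B ≤ C) :
    (∀ B' : ℕ → ℝ, IsDStrategy B' → mcaD M B' ≤ C → 0 ≤ wpD B B') ↔
      ∃ c : ℝ, 0 < c ∧ (∀ j ≤ k, B j = c) ∧ (∀ j > k, B j = 0) := by
  subst hC
  exact ⟨eq_const_of_unbeatable hM hodd hB hBC,
    fun ⟨_, hc, hle, hgt⟩ ↦ unbeatable_of_eq_const hM hc.le hle hgt⟩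

theorem stmt3 (M k : ℕ) (hM : 0 < M) (hk : 0 < k) (hodd : Odd k)
    (C : ℝ) (hC : C = (k : ℝ) / (2 * M))
    (B : ℕ → ℝ) (hB : IsDStrategy B) (hBC : mcaD M B ≤ C) :
    (∀ B' : ℕ → ℝ, IsDStrategy B' → mcaD M B' ≤ C → 0 ≤ wpD B B') ↔
      ∃ c : ℝ, 0 < c ∧ (∀ j ≤ k, B j = c) ∧ (∀ j > k, B j = 0) :=
  stmt3_general M k hM hodd C hC B hB hBC
end

section
/- Fix a constraint value C > 0 and let n ≥ 2. If (f₁, …, fₙ) is a tuple of admissible bounded measurable strategies satisfying wp(fₖ; f_j) = 0 for all j, k ∈ {1, …, n} and wp(fₖ; g) ≥ 0 for every admissible bounded measurable strategy g and every k, then (f₁, …, fₙ) is an equilibrium point of the bounded measurable game. -/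
open MeasureTheory Set

/-! Writing `wp f g` as the integral of `f x * g t * signKernel x t` over `(0, ∞)²`, Fubini shows
that `wp` is additive in its second argument and antisymmetric, the kernel being antisymmetric off
the null diagonal. Hence `wp (f k) (∑ f ℓ) = ∑ wp (f k) (f ℓ) = 0`, while
`wp g (∑ f ℓ) = -∑ wp (f ℓ) g ≤ 0`. -/

noncomputable def signKernel (x t : ℝ) : ℝ := if t ≤ x then 1 else -1

lemma measurable_signKernel : Measurable (fun p : ℝ × ℝ => signKernel p.1 p.2) :=
  Measurable.ite (measurableSet_le measurable_snd measurable_fst) measurable_const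
    measurable_const

lemma norm_signKernel_le (x t : ℝ) : ‖signKernel x t‖ ≤ 1 := by
  unfold signKernel; split <;> simp

lemma signKernel_swap {x t : ℝ} (h : x ≠ t) : signKernel t x = -signKernel x t := by
  unfold signKernel
  rcases h.lt_or_gt with h | h <;> simp [h.le, h.not_ge]

lemma sub_setIntegral_Ioi_eq_setIntegral_mul_signKernel {g : ℝ → ℝ}
    (hg : IntegrableOn g (Ioi 0)) {x : ℝ} (hx : 0 ≤ x) :
    (∫ t in Ioc 0 x, g t) - ∫ t in Ioi x, g t = ∫ t in Ioi 0, g t * signKernel x t := by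
  have hint : IntegrableOn (fun t => g t * signKernel x t) (Ioi 0) :=
    hg.mul_bdd (measurable_signKernel.comp measurable_prodMk_left).aestronglyMeasurable
      (.of_forall fun t => norm_signKernel_le x t)
  rw [← Ioc_union_Ioi_eq_Ioi hx, setIntegral_union (Ioc_disjoint_Ioi le_rfl) measurableSet_Ioi
    (hint.mono_set Ioc_subset_Ioi_self) (hint.mono_set (Ioi_subset_Ioi hx)), sub_eq_add_neg,
    ← integral_neg]
  congr 1
  · refine setIntegral_congr_fun measurableSet_Ioc fun t ht => ?_
    simp [signKernel, ht.2]
  · refine setIntegral_congr_fun measurableSet_Ioi fun t ht => ?_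
    simp [signKernel, not_le.mpr (show x < t from ht)]

lemma integrable_mul_mul_signKernel {f g : ℝ → ℝ} (hf : IntegrableOn f (Ioi 0))
    (hg : IntegrableOn g (Ioi 0)) :
    Integrable (fun p : ℝ × ℝ => f p.1 * g p.2 * signKernel p.1 p.2)
      ((volume.restrict (Ioi 0)).prod (volume.restrict (Ioi 0))) :=
  (hf.mul_prod hg).mul_bdd measurable_signKernel.aestronglyMeasurable
    (.of_forall fun p => norm_signKernel_le p.1 p.2)

lemma wp_eq_integral_prod {f g : ℝ → ℝ} (hf : IntegrableOn f (Ioi 0))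
    (hg : IntegrableOn g (Ioi 0)) :
    wp f g = ∫ p, f p.1 * g p.2 * signKernel p.1 p.2
      ∂(volume.restrict (Ioi 0)).prod (volume.restrict (Ioi 0)) := by
  rw [integral_prod _ (integrable_mul_mul_signKernel hf hg), wp]
  refine setIntegral_congr_fun measurableSet_Ioi fun x hx => ?_
  simp only [sub_setIntegral_Ioi_eq_setIntegral_mul_signKernel hg (le_of_lt hx),
    ← integral_const_mul, mul_assoc]

lemma ae_prod_fst_ne_snd (μ ν : Measure ℝ) [SFinite ν] [NullSingletonClass ν] :
    ∀ᵐ p ∂μ.prod ν, p.1 ≠ p.2 := by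
  rw [Measure.ae_prod_iff_ae_ae (p := fun p : ℝ × ℝ => p.1 ≠ p.2)
    (measurableSet_eq_fun measurable_fst measurable_snd).compl]
  refine .of_forall fun x => ?_
  filter_upwards [measure_eq_zero_iff_ae_notMem.mp (measure_singleton x)] with t ht
  exact fun h => ht h.symm

lemma wp_swap {f g : ℝ → ℝ} (hf : IntegrableOn f (Ioi 0)) (hg : IntegrableOn g (Ioi 0)) :
    wp g f = -wp f g := by
  rw [wp_eq_integral_prod hg hf, wp_eq_integral_prod hf hg, ← integral_prod_swap, ← integral_neg]
  refine integral_congr_ae ((ae_prod_fst_ne_snd _ _).mono fun p hp => ?_)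
  simp only [Prod.fst_swap, Prod.snd_swap, signKernel_swap hp]
  ring

lemma wp_finset_sum {ι : Type*} (A : Finset ι) {h : ℝ → ℝ} {F : ι → ℝ → ℝ}
    (hh : IntegrableOn h (Ioi 0)) (hF : ∀ ℓ ∈ A, IntegrableOn (F ℓ) (Ioi 0)) :
    wp h (fun x => ∑ ℓ ∈ A, F ℓ x) = ∑ ℓ ∈ A, wp h (F ℓ) := by
  simp only [wp_eq_integral_prod hh (integrable_finsetSum A hF), Finset.mul_sum, Finset.sum_mul]
  rw [integral_finsetSum A fun ℓ hℓ => integrable_mul_mul_signKernel hh (hF ℓ hℓ)]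
  exact Finset.sum_congr rfl fun ℓ hℓ => (wp_eq_integral_prod hh (hF ℓ hℓ)).symm

lemma IsStrategy.integrable_s8 {f : ℝ → ℝ} (hf : IsStrategy f) : Integrable f := by
  obtain ⟨hm, ⟨M, hM⟩, hpos, ⟨R, hR⟩, -⟩ := hf
  refine (integrableOn_iff_integrable_of_support_subset hR).mp ?_
  refine Measure.integrableOn_of_bounded measure_Icc_lt_top.ne hm.aestronglyMeasurable
    (M := M) (.of_forall fun x => ?_)
  rw [Real.norm_eq_abs, abs_of_nonneg (hpos x)]
  exact hM x

theorem stmt8_general (C : ℝ) (n : ℕ) (f : Fin n → ℝ → ℝ)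
    (hstrat : ∀ k, IsStrategy (f k))
    (hzero : ∀ j k, wp (f k) (f j) = 0)
    (hpos : ∀ k, ∀ g : ℝ → ℝ, IsStrategy g → mca g ≤ C → 0 ≤ wp (f k) g) :
    ∀ k, ∀ g : ℝ → ℝ, IsStrategy g → mca g ≤ C →
      wp g (fun x => ∑ ℓ ∈ Finset.univ.erase k, f ℓ x) ≤
        wp (f k) (fun x => ∑ ℓ ∈ Finset.univ.erase k, f ℓ x) := by
  intro k g hg hgC
  have hint ℓ : IntegrableOn (f ℓ) (Ioi 0) := (hstrat ℓ).integrable_s8.integrableOn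
  rw [wp_finset_sum _ hg.integrable_s8.integrableOn fun ℓ _ => hint ℓ,
    wp_finset_sum _ (hint k) fun ℓ _ => hint ℓ, Finset.sum_eq_zero fun ℓ _ => hzero ℓ k]
  refine Finset.sum_nonpos fun ℓ _ => ?_
  rw [wp_swap (hint ℓ) hg.integrable_s8.integrableOn, neg_nonpos]
  exact hpos ℓ g hg hgC

theorem stmt8 (C : ℝ) (hC : 0 < C) (n : ℕ) (hn : 2 ≤ n) (f : Fin n → ℝ → ℝ)
    (hstrat : ∀ k, IsStrategy (f k)) (hadm : ∀ k, mca (f k) ≤ C)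
    (hzero : ∀ j k, wp (f k) (f j) = 0)
    (hpos : ∀ k, ∀ g : ℝ → ℝ, IsStrategy g → mca g ≤ C → 0 ≤ wp (f k) g) :
    ∀ k, ∀ g : ℝ → ℝ, IsStrategy g → mca g ≤ C →
      wp g (fun x => ∑ ℓ ∈ Finset.univ.erase k, f ℓ x) ≤
        wp (f k) (fun x => ∑ ℓ ∈ Finset.univ.erase k, f ℓ x) :=
  stmt8_general C n f hstrat hzero hpos
end
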